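/- arXiv:1611.07512 — 15 statements merged into one kernel-verified Lean document; each statement's English description precedes it below -/
import Mathlib

section
/- Let p ≥ 3 be a prime, and let j, h be integers with p not dividing j. Then ∑_{i=1}^{p} ∏_{l∈{1,…,p}, l≠i} (j² − (h−2l+1)²) ≡ ∑_{i=1}^{p} ∏_{l∈{1,…,p}, l≠i} (j² − (h+2l−1)²) (mod p³). -/
/-!
Write `c_l = 2l - 1` and `P = ∏_{l=1}^{p} (X - c_l)`. With `u = j - h`, `v = j + h` one has
`j² - (h + c_l)² = (u - c_l)(v + c_l)`, the two factors summing to `2j`, so the product rule gives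
`2j · R(h) = P(u) P'(v + 2p) + P'(u) P(v + 2p)`, where `R(h)` is the right-hand sum and
`∏ (t + c_l) = P(t + 2p)` by reflecting `l ↦ p + 1 - l`. The left-hand sum is `R(-h)`, which
swaps `u` and `v`.

Modulo `p` the `c_l` run through all residues, so `P ≡ X^p - X`. Hence `p` divides every value of
`P` and of its second Hasse derivative, and Taylor expansion with step `2p` shows that both
`2j · R(h)` and `2j · R(-h)` are `≡ P(u)P'(v) + P'(u)P(v) + 2p P'(u)P'(v) (mod p³)`.
Since `p ∤ 2j`, the factor `2j` cancels.
-/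

open Polynomial Finset

section FiniteField

variable {K : Type*} [Field K] [Fintype K]

theorem prod_univ_X_sub_C_eq_X_pow_card_sub_X :
    ∏ a : K, (X - C a) = X ^ Fintype.card K - X := by
  have hq := Fintype.one_lt_card (α := K)
  have hmonic : (X ^ Fintype.card K - X : K[X]).Monic :=
    monic_X_pow_sub (by rw [degree_X]; exact_mod_cast hq)
  have hcard : Multiset.card (X ^ Fintype.card K - X : K[X]).roots =
      (X ^ Fintype.card K - X : K[X]).natDegree := by
    rw [FiniteField.roots_X_pow_card_sub_X, FiniteField.X_pow_card_sub_X_natDegree_eq K hq]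
    rfl
  simpa [FiniteField.roots_X_pow_card_sub_X] using
    prod_multiset_X_sub_C_of_monic_of_roots_card_eq hmonic hcard

theorem prod_X_sub_C_eq_X_pow_card_sub_X {ι : Type*} [DecidableEq K] {s : Finset ι} {f : ι → K}
    (hf : Set.InjOn f s) (hs : #s = Fintype.card K) :
    ∏ i ∈ s, (X - C (f i)) = X ^ Fintype.card K - X := by
  have himage : s.image f = univ := eq_univ_of_card _ (by rw [card_image_of_injOn hf, hs])
  rw [← prod_image (f := fun a => X - C a) hf, himage, prod_univ_X_sub_C_eq_X_pow_card_sub_X]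

end FiniteField

theorem dvd_eval_of_eval_map_eq_zero {n : ℕ} {f : ℤ[X]} {x : ℤ}
    (h : (f.map (Int.castRingHom (ZMod n))).eval (x : ZMod n) = 0) : (n : ℤ) ∣ f.eval x := by
  rw [← ZMod.intCast_zmod_eq_zero_iff_dvd, ← h, eval_intCast_map, eq_intCast, Int.cast_id]

theorem eval_derivative_derivative (f : ℤ[X]) (x : ℤ) :
    f.derivative.derivative.eval x = 2 * (hasseDeriv 2 f).eval x := by
  have h := congrArg (eval x) (congrFun (factorial_smul_hasseDeriv (R := ℤ) (k := 2)) f)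
  simp only [Nat.factorial_two, Function.iterate_succ, Function.iterate_zero,
    Function.comp_apply, id, nsmul_eq_mul] at h
  simpa using h.symm

section OddPrime

variable {p : ℕ} [Fact p.Prime]

theorem natCast_dvd_two_mul_iff (hp2 : p ≠ 2) {a : ℤ} : (p : ℤ) ∣ 2 * a ↔ (p : ℤ) ∣ a := by
  refine ⟨fun h => ?_, fun h => h.mul_left 2⟩
  refine ((Nat.prime_iff_prime_int.mp Fact.out).dvd_or_dvd h).resolve_left fun h2 => hp2 ?_
  exact (Nat.prime_dvd_prime_iff_eq Fact.out Nat.prime_two).mp (by exact_mod_cast h2)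

theorem injOn_two_mul_sub_one_Icc (hp2 : p ≠ 2) :
    Set.InjOn (fun l : ℕ => 2 * (l : ZMod p) - 1) (Icc 1 p) := by
  intro a ha b hb hab
  have h2 : (2 : ZMod p) ≠ 0 := Ring.two_ne_zero (by rwa [ZMod.ringChar_zmod_n])
  have hcast : (a : ZMod p) = b := mul_left_cancel₀ h2 (sub_left_inj.mp hab)
  rw [ZMod.natCast_eq_natCast_iff] at hcast
  simp only [coe_Icc, Set.mem_Icc] at ha hb
  exact hcast.eq_of_abs_lt (abs_sub_lt_iff.mpr ⟨by omega, by omega⟩)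

theorem dvd_eval_of_map_eq_X_pow_sub_X {f : ℤ[X]}
    (hf : f.map (Int.castRingHom (ZMod p)) = X ^ p - X) (x : ℤ) : (p : ℤ) ∣ f.eval x :=
  dvd_eval_of_eval_map_eq_zero (by simp [hf])

theorem dvd_eval_hasseDeriv_two_of_map_eq_X_pow_sub_X (hp2 : p ≠ 2) {f : ℤ[X]}
    (hf : f.map (Int.castRingHom (ZMod p)) = X ^ p - X) (x : ℤ) :
    (p : ℤ) ∣ (hasseDeriv 2 f).eval x := by
  have hdd : (p : ℤ) ∣ f.derivative.derivative.eval x :=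
    dvd_eval_of_eval_map_eq_zero (by simp [← derivative_map, hf, derivative_X_pow])
  rwa [eval_derivative_derivative, natCast_dvd_two_mul_iff hp2] at hdd

end OddPrime

theorem eval_add_modEq_of_dvd_eval_hasseDeriv_two (f : ℤ[X]) {m s x : ℤ} (hs : m ∣ s)
    (h2 : m ∣ (hasseDeriv 2 f).eval x) :
    f.eval (x + s) ≡ f.eval x + s * f.derivative.eval x [ZMOD m ^ 3] := by
  have hexp : f.eval (x + s) =
      ∑ k ∈ range (3 + f.natDegree), (hasseDeriv k f).eval x * s ^ k := by
    rw [add_comm x, ← taylor_eval, eval_eq_sum_range' (n := 3 + f.natDegree)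
      (by rw [natDegree_taylor]; omega)]
    simp only [taylor_coeff]
  have htail : m ^ 3 ∣ ∑ k ∈ range f.natDegree, (hasseDeriv (3 + k) f).eval x * s ^ (3 + k) :=
    dvd_sum fun k _ => Dvd.dvd.mul_left
      ((pow_dvd_pow_of_dvd hs 3).trans (pow_dvd_pow s (Nat.le_add_right 3 k))) _
  have hsq : m ^ 3 ∣ (hasseDeriv 2 f).eval x * s ^ 2 := by
    rw [pow_succ']
    exact mul_dvd_mul h2 (pow_dvd_pow_of_dvd hs 2)
  rw [Int.modEq_comm, Int.modEq_iff_dvd, hexp, sum_range_add]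
  simp only [sum_range_succ, sum_range_zero, hasseDeriv_zero', hasseDeriv_one']
  exact (dvd_add hsq htail).trans (dvd_of_eq (by ring))

theorem eval_add_modEq_of_dvd_eval_derivative (f : ℤ[X]) {m s x : ℤ} (hs : m ∣ s)
    (h : m ∣ f.derivative.eval x) : f.eval (x + s) ≡ f.eval x [ZMOD m ^ 2] := by
  obtain ⟨k, hk⟩ := binomExpansion f x s
  rw [Int.modEq_comm, Int.modEq_iff_dvd, hk, pow_two]
  exact (dvd_add (mul_dvd_mul h hs) ((mul_dvd_mul hs hs).mul_left k)).trans (dvd_of_eq (by ring))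

theorem modEq_swap_of_dvd_eval_hasseDeriv_two (P : ℤ[X]) {m s : ℤ} (hs : m ∣ s)
    (hP : ∀ x, m ∣ P.eval x) (hH : ∀ x, m ∣ (hasseDeriv 2 P).eval x) (u v : ℤ) :
    P.eval u * P.derivative.eval (v + s) + P.derivative.eval u * P.eval (v + s) ≡
      P.eval v * P.derivative.eval (u + s) + P.derivative.eval v * P.eval (u + s)
        [ZMOD m ^ 3] := by
  have hD : ∀ x, P.derivative.eval (x + s) ≡ P.derivative.eval x [ZMOD m ^ 2] := fun x =>
    eval_add_modEq_of_dvd_eval_derivative _ hs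
      (by rw [eval_derivative_derivative]; exact (hH x).mul_left 2)
  have hT : ∀ x, P.eval (x + s) ≡ P.eval x + s * P.derivative.eval x [ZMOD m ^ 3] := fun x =>
    eval_add_modEq_of_dvd_eval_hasseDeriv_two P hs (hH x)
  have hsymm : ∀ u v,
      P.eval u * P.derivative.eval (v + s) + P.derivative.eval u * P.eval (v + s) ≡
        P.eval u * P.derivative.eval v + P.derivative.eval u * P.eval v +
          s * P.derivative.eval u * P.derivative.eval v [ZMOD m ^ 3] := by
    intro u v
    calc _ ≡ P.eval u * P.derivative.eval v +
          P.derivative.eval u * (P.eval v + s * P.derivative.eval v) [ZMOD m ^ 3] :=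
          ((hD v).mul_left'.of_dvd (by rw [pow_succ']; exact mul_dvd_mul_right (hP u) _)).add
            ((hT v).mul_left _)
      _ = _ := by ring
  calc _ ≡ _ [ZMOD m ^ 3] := hsymm u v
    _ = _ := by ring
    _ ≡ _ [ZMOD m ^ 3] := (hsymm v u).symm

theorem Int.ModEq.cancel_left_of_isCoprime {m c a b : ℤ} (hmc : IsCoprime m c)
    (h : c * a ≡ c * b [ZMOD m]) : a ≡ b [ZMOD m] := by
  rw [Int.modEq_iff_dvd] at h ⊢
  exact hmc.dvd_of_dvd_mul_left (by rwa [mul_sub])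

theorem mul_sum_prod_erase_mul {ι R : Type*} [CommSemiring R] [DecidableEq ι] (s : Finset ι)
    (f g : ι → R) {a : R} (h : ∀ i ∈ s, f i + g i = a) :
    a * ∑ i ∈ s, ∏ l ∈ s.erase i, f l * g l =
      (∏ l ∈ s, f l) * ∑ i ∈ s, ∏ l ∈ s.erase i, g l +
        (∑ i ∈ s, ∏ l ∈ s.erase i, f l) * ∏ l ∈ s, g l := by
  rw [mul_sum, mul_sum, sum_mul, ← sum_add_distrib]
  refine sum_congr rfl fun i hi => ?_
  rw [← mul_prod_erase s f hi, ← mul_prod_erase s g hi, prod_mul_distrib, ← h i hi]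
  ring

noncomputable def oddPoly (n : ℕ) : ℤ[X] := ∏ l ∈ Icc 1 n, (X - C (2 * (l : ℤ) - 1))

theorem map_oddPoly {p : ℕ} [Fact p.Prime] (hp2 : p ≠ 2) :
    (oddPoly p).map (Int.castRingHom (ZMod p)) = X ^ p - X := by
  have h := prod_X_sub_C_eq_X_pow_card_sub_X (injOn_two_mul_sub_one_Icc hp2) (by simp)
  rw [ZMod.card] at h
  rw [← h, oddPoly, Polynomial.map_prod]
  refine prod_congr rfl fun l _ => ?_
  rw [Polynomial.map_sub, map_X, map_C]
  congr 2
  simp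

theorem eval_oddPoly (n : ℕ) (t : ℤ) :
    (oddPoly n).eval t = ∏ l ∈ Icc 1 n, (t - (2 * (l : ℤ) - 1)) := by
  simp [oddPoly, eval_prod]

theorem eval_derivative_oddPoly (n : ℕ) (t : ℤ) :
    (oddPoly n).derivative.eval t =
      ∑ i ∈ Icc 1 n, ∏ l ∈ (Icc 1 n).erase i, (t - (2 * (l : ℤ) - 1)) := by
  simp [oddPoly, derivative_prod_finset, eval_finsetSum, eval_prod]

theorem oddPoly_comp_X_add_C (n : ℕ) :
    (oddPoly n).comp (X + C (2 * (n : ℤ))) = ∏ l ∈ Icc 1 n, (X + C (2 * (l : ℤ) - 1)) := by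
  rw [oddPoly, Polynomial.prod_comp]
  refine prod_nbij' (fun l => n + 1 - l) (fun l => n + 1 - l) ?_ ?_ ?_ ?_ ?_ <;>
    intro l hl <;> simp only [mem_Icc] at hl ⊢
  all_goals try omega
  rw [sub_comp, X_comp, C_comp, add_sub_assoc, ← C_sub, Nat.cast_sub (by omega)]
  congr 2
  push_cast
  ring

theorem eval_oddPoly_add (n : ℕ) (t : ℤ) :
    (oddPoly n).eval (t + 2 * n) = ∏ l ∈ Icc 1 n, (t + (2 * (l : ℤ) - 1)) := by
  simpa [eval_prod] using congrArg (eval t) (oddPoly_comp_X_add_C n)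

theorem eval_derivative_oddPoly_add (n : ℕ) (t : ℤ) :
    (oddPoly n).derivative.eval (t + 2 * n) =
      ∑ i ∈ Icc 1 n, ∏ l ∈ (Icc 1 n).erase i, (t + (2 * (l : ℤ) - 1)) := by
  simpa [derivative_comp, derivative_prod_finset, eval_finsetSum, eval_prod] using
    congrArg (fun f => f.derivative.eval t) (oddPoly_comp_X_add_C n)

theorem two_mul_sum_prod_erase_sq_sub_sq (n : ℕ) (j h : ℤ) :
    2 * j * ∑ i ∈ Icc 1 n, ∏ l ∈ (Icc 1 n).erase i, (j ^ 2 - (h + 2 * (l : ℤ) - 1) ^ 2) =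
      (oddPoly n).eval (j - h) * (oddPoly n).derivative.eval (j + h + 2 * n) +
        (oddPoly n).derivative.eval (j - h) * (oddPoly n).eval (j + h + 2 * n) := by
  rw [eval_oddPoly_add, eval_derivative_oddPoly_add, eval_oddPoly, eval_derivative_oddPoly,
    ← mul_sum_prod_erase_mul (a := 2 * j) _ _ _ fun _ _ => by ring]
  congr 1
  exact sum_congr rfl fun i _ => prod_congr rfl fun l _ => by ring

/-- For `p ≥ 3` prime and integers `j, h` with `p ∤ j`,
`∑_{i=1}^{p} ∏_{l ≠ i} (j² − (h−2l+1)²) ≡ ∑_{i=1}^{p} ∏_{l ≠ i} (j² − (h+2l−1)²) (mod p³)`. -/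
theorem stmt1 (p : ℕ) (hp : p.Prime) (hp3 : 3 ≤ p) (j h : ℤ) (hj : ¬ (p : ℤ) ∣ j) :
    (∑ i ∈ Finset.Icc 1 p, ∏ l ∈ (Finset.Icc 1 p).erase i,
        (j ^ 2 - (h - 2 * (l : ℤ) + 1) ^ 2)) ≡
    (∑ i ∈ Finset.Icc 1 p, ∏ l ∈ (Finset.Icc 1 p).erase i,
        (j ^ 2 - (h + 2 * (l : ℤ) - 1) ^ 2)) [ZMOD ((p : ℤ) ^ 3)] := by
  have : Fact p.Prime := ⟨hp⟩
  have hp2 : p ≠ 2 := by omega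
  have hmap := map_oddPoly hp2
  have hswap := modEq_swap_of_dvd_eval_hasseDeriv_two (oddPoly p) (dvd_mul_left (p : ℤ) 2)
    (dvd_eval_of_map_eq_X_pow_sub_X hmap) (dvd_eval_hasseDeriv_two_of_map_eq_X_pow_sub_X hp2 hmap)
    (j - h) (j + h)
  have hneg := two_mul_sum_prod_erase_sq_sub_sq p j (-h)
  rw [sub_neg_eq_add, ← sub_eq_add_neg] at hneg
  rw [← two_mul_sum_prod_erase_sq_sub_sq, ← hneg] at hswap
  have hsq (l : ℕ) : (h - 2 * (l : ℤ) + 1) ^ 2 = (-h + 2 * (l : ℤ) - 1) ^ 2 := by ring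
  simp only [hsq]
  have hcop : IsCoprime ((p : ℤ) ^ 3) (2 * j) :=
    ((Nat.prime_iff_prime_int.mp hp).coprime_iff_not_dvd.mpr
      (by rwa [natCast_dvd_two_mul_iff hp2])).pow_left
  exact (Int.ModEq.cancel_left_of_isCoprime hcop hswap).symm
end

section
/- Let p ≥ 3 be a prime, let i be an integer with 0 ≤ i ≤ p−1, and let j be any integer. Set D = ∏_{l=1}^{p} (j² − (i−2l+1)²) − ∏_{l=1}^{p} (j² − (i+2l−1)²). Then D ≡ 0 (mod p³) or D ≡ 4p² (mod p³). -/
/-!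
With `x = j - i + 1`, `y = j + i + 1` and `G t = t (t + 2) ⋯ (t + 2p - 2)` (`twoStepProd p t`),
factoring the differences of squares gives `D = G x · G (y - 2p) - G y · G (x - 2p)`. The `p`
factors of `G t` run over all residues mod `p`, so exactly one of them is a multiple `p u` of `p`,
and by Wilson's theorem the others multiply to `-1` mod `p`; replacing `t` by `t - 2p` keeps the
position of that factor and lowers `u` by `2`. Hence
`D ≡ p² (u (v - 2) - v (u - 2)) = 2p² (v - u)` mod `p³`. Since `y = x + 2i` with `0 ≤ i < p`,
the multiples of `p` in `G x` and `G y` are either the same integer or differ by `2p`, i.e.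
`v - u ∈ {0, 2}`.
-/

open Finset

namespace ZMod

variable {p : ℕ} [Fact p.Prime]

theorem prod_range_erase_eq_neg_one {f : ℕ → ZMod p} (hf : Set.InjOn f (range p))
    {k₀ : ℕ} (hk₀ : k₀ < p) (hfk₀ : f k₀ = 0) :
    ∏ k ∈ (range p).erase k₀, f k = -1 := by
  have hinj : Set.InjOn (fun k => (f k).val) ((range p).erase k₀) := fun a ha b hb hab =>
    hf (mem_of_mem_erase ha) (mem_of_mem_erase hb) (val_injective p hab)
  have himage : ((range p).erase k₀).image (fun k => (f k).val) = Ico 1 p := by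
    refine eq_of_subset_of_card_le (fun n hn => ?_) ?_
    · obtain ⟨k, hk, rfl⟩ := mem_image.mp hn
      have hne : f k ≠ 0 := fun h => (ne_of_mem_erase hk)
        (hf (mem_of_mem_erase hk) (mem_range.mpr hk₀) (h.trans hfk₀.symm))
      simpa [Nat.one_le_iff_ne_zero, val_lt] using hne
    · rw [card_image_of_injOn hinj, card_erase_of_mem (mem_range.mpr hk₀), card_range,
        Nat.card_Ico]
  calc ∏ k ∈ (range p).erase k₀, f k
      = ∏ k ∈ (range p).erase k₀, (((f k).val : ℕ) : ZMod p) := by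
        simp only [natCast_val, cast_id', id]
    _ = ∏ n ∈ Ico 1 p, (n : ZMod p) := by rw [← himage, prod_image hinj]
    _ = -1 := prod_Ico_one_prime p

theorem injOn_add_two_mul (hp2 : p ≠ 2) (t : ZMod p) :
    Set.InjOn (fun k : ℕ => t + 2 * k) (range p) := by
  intro a ha b hb hab
  have h2 : (2 : ZMod p) ≠ 0 := Ring.two_ne_zero (by rwa [ringChar_zmod_n])
  have : (a : ZMod p) = b := mul_left_cancel₀ h2 (add_left_cancel hab)
  simpa [natCast_eq_natCast_iff', Nat.mod_eq_of_lt (mem_range.mp ha),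
    Nat.mod_eq_of_lt (mem_range.mp hb)] using this

theorem exists_add_two_mul_eq_zero (hp2 : p ≠ 2) (t : ZMod p) : ∃ k < p, t + 2 * k = 0 := by
  have h2 : (2 : ZMod p) ≠ 0 := Ring.two_ne_zero (by rwa [ringChar_zmod_n])
  refine ⟨(-t / 2).val, val_lt _, ?_⟩
  rw [natCast_val, cast_id', id, mul_div_cancel₀ _ h2, add_neg_cancel]

end ZMod

def twoStepProd (n : ℕ) (t : ℤ) : ℤ := ∏ k ∈ range n, (t + 2 * k)

theorem exists_add_two_mul_eq_mul {p : ℕ} (hp : p.Prime) (hp2 : p ≠ 2) (t : ℤ) :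
    ∃ k < p, ∃ u, t + 2 * k = p * u := by
  have := Fact.mk hp
  obtain ⟨k, hk, h⟩ := ZMod.exists_add_two_mul_eq_zero hp2 (t : ZMod p)
  exact ⟨k, hk, (ZMod.intCast_zmod_eq_zero_iff_dvd _ p).mp (by push_cast; exact h)⟩

theorem exists_twoStepProd_eq_mul {p : ℕ} (hp : p.Prime) (hp2 : p ≠ 2) {t u : ℤ} {k : ℕ}
    (hk : k < p) (h : t + 2 * k = p * u) :
    ∃ R, twoStepProd p t = p * u * R ∧ R ≡ -1 [ZMOD p] := by
  have := Fact.mk hp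
  refine ⟨∏ l ∈ (range p).erase k, (t + 2 * l), ?_, ?_⟩
  · rw [twoStepProd, ← mul_prod_erase _ _ (mem_range.mpr hk), h]
  · rw [← ZMod.intCast_eq_intCast_iff]
    push_cast
    refine ZMod.prod_range_erase_eq_neg_one (ZMod.injOn_add_two_mul hp2 _) hk ?_
    exact_mod_cast (ZMod.intCast_zmod_eq_zero_iff_dvd _ p).mpr ⟨u, h⟩

theorem twoStepProd_mul_modEq {p : ℕ} (hp : p.Prime) (hp2 : p ≠ 2) {s t u v : ℤ} {k l : ℕ}
    (hk : k < p) (hl : l < p) (hs : s + 2 * k = p * u) (ht : t + 2 * l = p * v) :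
    twoStepProd p s * twoStepProd p t ≡ p ^ 2 * (u * v) [ZMOD p ^ 3] := by
  obtain ⟨R, hR, hR1⟩ := exists_twoStepProd_eq_mul hp hp2 hk hs
  obtain ⟨S, hS, hS1⟩ := exists_twoStepProd_eq_mul hp hp2 hl ht
  have hRS : u * v * (R * S) ≡ u * v * 1 [ZMOD p] := by
    simpa using (hR1.mul hS1).mul_left (u * v)
  rw [hR, hS, show (p : ℤ) ^ 3 = p ^ 2 * p by ring]
  calc p * u * R * (p * v * S) = p ^ 2 * (u * v * (R * S)) := by ring
    _ ≡ p ^ 2 * (u * v * 1) [ZMOD p ^ 2 * p] := hRS.mul_left'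
    _ = p ^ 2 * (u * v) := by rw [mul_one]

theorem eq_zero_or_two_of_mul_eq_two_mul {p w m : ℤ} (hp : Odd p) (h : p * w = 2 * m)
    (hm0 : -p < m) (hm1 : m < 2 * p) : w = 0 ∨ w = 2 := by
  obtain ⟨w', rfl⟩ : Even w := by
    have : Even (p * w) := ⟨m, by rw [h]; ring⟩
    exact (Int.even_mul.mp this).resolve_left (Int.not_even_iff_odd.mpr hp)
  have hp0 : 0 < p := by nlinarith
  have hw0 : -1 < w' := by nlinarith
  have hw1 : w' < 2 := by nlinarith
  omega

theorem prod_Icc_sq_sub_sq (n : ℕ) (a b : ℤ) :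
    ∏ l ∈ Icc 1 n, (a ^ 2 - (b - 2 * (l : ℤ) + 1) ^ 2) =
      twoStepProd n (a - b + 1) * twoStepProd n (a + b + 1 - 2 * n) := by
  have hleft :
      ∏ l ∈ Icc 1 n, (a - b + 1 + 2 * ((l - 1 : ℕ) : ℤ)) = twoStepProd n (a - b + 1) := by
    refine prod_nbij' (· - 1) (· + 1) ?_ ?_ ?_ ?_ ?_ <;> intro l hl <;> simp at hl ⊢ <;> omega
  have hright : ∏ l ∈ Icc 1 n, (a + b + 1 - 2 * n + 2 * ((n - l : ℕ) : ℤ)) =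
      twoStepProd n (a + b + 1 - 2 * n) := by
    refine prod_nbij' (n - ·) (n - ·) ?_ ?_ ?_ ?_ ?_ <;> intro l hl <;> simp at hl ⊢ <;> omega
  rw [← hleft, ← hright, ← prod_mul_distrib]
  refine prod_congr rfl fun l hl => ?_
  obtain ⟨h1, h2⟩ := mem_Icc.mp hl
  push_cast [h1, h2]
  ring

/-- For `p ≥ 3` prime, `0 ≤ i ≤ p−1` and any integer `j`, the difference
`D = ∏_{l=1}^p (j² − (i−2l+1)²) − ∏_{l=1}^p (j² − (i+2l−1)²)` satisfies
`D ≡ 0 (mod p³)` or `D ≡ 4p² (mod p³)`. -/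
theorem stmt2 (p : ℕ) (hp : p.Prime) (hp3 : 3 ≤ p) (i j : ℤ)
    (hi0 : 0 ≤ i) (hi1 : i ≤ (p : ℤ) - 1)
    (D : ℤ)
    (hD : D = (∏ l ∈ Finset.Icc 1 p, (j ^ 2 - (i - 2 * (l : ℤ) + 1) ^ 2)) -
              (∏ l ∈ Finset.Icc 1 p, (j ^ 2 - (i + 2 * (l : ℤ) - 1) ^ 2))) :
    D ≡ 0 [ZMOD ((p : ℤ) ^ 3)] ∨ D ≡ 4 * (p : ℤ) ^ 2 [ZMOD ((p : ℤ) ^ 3)] := by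
  have hp2 : p ≠ 2 := by omega
  have hD' : D = twoStepProd p (j - i + 1) * twoStepProd p (j + i + 1 - 2 * p) -
      twoStepProd p (j + i + 1) * twoStepProd p (j - i + 1 - 2 * p) := by
    have hneg : ∏ l ∈ Icc 1 p, (j ^ 2 - (i + 2 * (l : ℤ) - 1) ^ 2) =
        ∏ l ∈ Icc 1 p, (j ^ 2 - (-i - 2 * (l : ℤ) + 1) ^ 2) :=
      prod_congr rfl fun _ _ => by ring
    rw [hD, hneg, prod_Icc_sq_sub_sq, prod_Icc_sq_sub_sq, sub_neg_eq_add, ← sub_eq_add_neg]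
  obtain ⟨k, hk, u, hu⟩ := exists_add_two_mul_eq_mul hp hp2 (j - i + 1)
  obtain ⟨l, hl, v, hv⟩ := exists_add_two_mul_eq_mul hp hp2 (j + i + 1)
  have hDmod : D ≡ 2 * p ^ 2 * (v - u) [ZMOD p ^ 3] := by
    rw [hD']
    calc _ ≡ p ^ 2 * (u * (v - 2)) - p ^ 2 * (v * (u - 2)) [ZMOD p ^ 3] :=
          (twoStepProd_mul_modEq hp hp2 hk hl hu (by linear_combination hv)).sub
            (twoStepProd_mul_modEq hp hp2 hl hk hv (by linear_combination hu))
      _ = 2 * p ^ 2 * (v - u) := by ring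
  rcases eq_zero_or_two_of_mul_eq_two_mul (p := p) (w := v - u) (m := i + l - k)
      (by exact_mod_cast hp.odd_of_ne_two hp2)
      (by linear_combination hu - hv) (by omega) (by omega) with h | h
  · left
    simpa [h] using hDmod
  · right
    calc D ≡ 2 * p ^ 2 * (v - u) [ZMOD p ^ 3] := hDmod
      _ = 4 * p ^ 2 := by rw [h]; ring
end

section
/- Let p ≥ 3 be a prime and let j, h be any integers. Then p² divides ∏_{l=1}^{p} (j² − (h−2l+1)²). -/
lemma exists_l (p : ℕ) (hp : p.Prime) (hp3 : 3 ≤ p) (a : ℤ) :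
    ∃ l ∈ Finset.Icc 1 p, (p : ℤ) ∣ 2 * (l : ℤ) - a := by
  haveI : Fact p.Prime := ⟨hp⟩
  have h2 : (2 : ZMod p) ≠ 0 := by
    have : ¬ ((2:ℕ) : ZMod p) = 0 := by
      rw [ZMod.natCast_eq_zero_iff]
      intro hd
      have := Nat.le_of_dvd (by norm_num) hd
      omega
    simpa using this
  set x : ZMod p := (a : ZMod p) * (2 : ZMod p)⁻¹ with hx
  have hpos : 0 < p := hp.pos
  obtain ⟨l, hl1, hlp, hl⟩ : ∃ l, 1 ≤ l ∧ l ≤ p ∧ ((l : ℕ) : ZMod p) = x := by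
    by_cases hv : x.val = 0
    · refine ⟨p, by omega, le_refl p, ?_⟩
      rw [ZMod.natCast_self]
      exact ((ZMod.val_eq_zero x).mp hv).symm
    · exact ⟨x.val, Nat.one_le_iff_ne_zero.mpr hv, le_of_lt (ZMod.val_lt x),
        by simp [ZMod.natCast_val, ZMod.cast_id]⟩
  have hmul : (2 : ZMod p) * x = (a : ZMod p) := by
    rw [hx, mul_comm (a : ZMod p), ← mul_assoc, mul_comm (2 : ZMod p),
      inv_mul_cancel₀ h2, one_mul]
  refine ⟨l, Finset.mem_Icc.mpr ⟨hl1, hlp⟩, ?_⟩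
  rw [← ZMod.intCast_zmod_eq_zero_iff_dvd]
  push_cast
  rw [hl, hmul, sub_self]

/-- For `p ≥ 3` prime and any integers `j, h`,
`p²` divides `∏_{l=1}^p (j² − (h−2l+1)²)`. -/
theorem stmt4 (p : ℕ) (hp : p.Prime) (hp3 : 3 ≤ p) (j h : ℤ) :
    ((p : ℤ) ^ 2) ∣ ∏ l ∈ Finset.Icc 1 p, (j ^ 2 - (h - 2 * (l : ℤ) + 1) ^ 2) := by
  obtain ⟨l₁, hl₁m, hl₁⟩ := exists_l p hp hp3 (h + 1 - j)
  obtain ⟨l₂, hl₂m, hl₂⟩ := exists_l p hp hp3 (h + 1 + j)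
  have hd1 : (p : ℤ) ∣ j - (h - 2 * (l₁ : ℤ) + 1) := by
    have : j - (h - 2 * (l₁ : ℤ) + 1) = 2 * (l₁ : ℤ) - (h + 1 - j) := by ring
    rw [this]; exact hl₁
  have hd2 : (p : ℤ) ∣ j + (h - 2 * (l₂ : ℤ) + 1) := by
    have : j + (h - 2 * (l₂ : ℤ) + 1) = -(2 * (l₂ : ℤ) - (h + 1 + j)) := by ring
    rw [this]; exact (dvd_neg).mpr hl₂
  by_cases heq : l₁ = l₂
  · subst heq
    have : ((p : ℤ)) ^ 2 ∣ j ^ 2 - (h - 2 * (l₁ : ℤ) + 1) ^ 2 := by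
      have := mul_dvd_mul hd1 hd2
      have he : (j - (h - 2 * (l₁ : ℤ) + 1)) * (j + (h - 2 * (l₁ : ℤ) + 1))
          = j ^ 2 - (h - 2 * (l₁ : ℤ) + 1) ^ 2 := by ring
      rwa [he, ← sq] at this
    exact this.trans (Finset.dvd_prod_of_mem _ hl₁m)
  · have hsub : ({l₁, l₂} : Finset ℕ) ⊆ Finset.Icc 1 p := by
      intro x hx
      simp only [Finset.mem_insert, Finset.mem_singleton] at hx
      rcases hx with rfl | rfl <;> assumption
    have hdvd : (∏ l ∈ ({l₁, l₂} : Finset ℕ), (j ^ 2 - (h - 2 * (l : ℤ) + 1) ^ 2))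
        ∣ ∏ l ∈ Finset.Icc 1 p, (j ^ 2 - (h - 2 * (l : ℤ) + 1) ^ 2) :=
      Finset.prod_dvd_prod_of_subset _ _ _ hsub
    rw [Finset.prod_pair heq] at hdvd
    refine dvd_trans ?_ hdvd
    rw [sq]
    have h1 : (p : ℤ) ∣ j ^ 2 - (h - 2 * (l₁ : ℤ) + 1) ^ 2 := by
      have : j ^ 2 - (h - 2 * (l₁ : ℤ) + 1) ^ 2
          = (j - (h - 2 * (l₁ : ℤ) + 1)) * (j + (h - 2 * (l₁ : ℤ) + 1)) := by ring
      rw [this]; exact hd1.mul_right _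
    have h2 : (p : ℤ) ∣ j ^ 2 - (h - 2 * (l₂ : ℤ) + 1) ^ 2 := by
      have : j ^ 2 - (h - 2 * (l₂ : ℤ) + 1) ^ 2
          = (j + (h - 2 * (l₂ : ℤ) + 1)) * (j - (h - 2 * (l₂ : ℤ) + 1)) := by ring
      rw [this]; exact hd2.mul_right _
    exact mul_dvd_mul h1 h2
end

section
/- Let A be an associative unital ℚ-algebra and let e, f, h ∈ A satisfy the sl₂ commutation relations h*e − e*h = 2·e, h*f − f*h = −2·f, e*f − f*e = h. Set δ = 4·f*e + (h+1)². Then for every natural number n ≥ 0, 4^n · e^n · f^n = ∏_{l=1}^{n} (δ − (h − 2l + 1)²), where the factors of the product (which pairwise commute) are multiplied in order of increasing l. -/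
/-- Shift lemma: `(h - c)² · f = f · (h - (c+2))²` when `c` commutes with `f`. -/
lemma aux_shift {A : Type*} [Ring A] (f h : A) (rel2' : h * f = f * h - 2 * f)
    (c : A) (hc : c * f = f * c) : (h - c) ^ 2 * f = f * (h - (c + 2)) ^ 2 := by
  have h1 : (h - c) * f = f * (h - (c + 2)) := by
    rw [sub_mul, rel2', hc]; noncomm_ring
  calc (h - c) ^ 2 * f = (h - c) * ((h - c) * f) := by noncomm_ring
    _ = (h - c) * (f * (h - (c + 2))) := by rw [h1]
    _ = ((h - c) * f) * (h - (c + 2)) := by noncomm_ring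
    _ = (f * (h - (c + 2))) * (h - (c + 2)) := by rw [h1]
    _ = f * (h - (c + 2)) ^ 2 := by noncomm_ring

/-- In a ℚ-algebra with sl₂-triple `(e, f, h)` and Casimir `δ = 4fe + (h+1)²`,
for every `n ≥ 0`: `4^n · e^n · f^n = ∏_{l=1}^n (δ − (h − 2l + 1)²)` (factors in increasing
order of `l`). -/
theorem stmt5 (A : Type*) [Ring A] [Algebra ℚ A]
    (e f h : A)
    (rel1 : h * e - e * h = 2 * e)
    (rel2 : h * f - f * h = -2 * f)
    (rel3 : e * f - f * e = h)
    (δ : A) (hδ : δ = 4 * (f * e) + (h + 1) ^ 2) (n : ℕ) :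
    (4 : A) ^ n * e ^ n * f ^ n =
      (((List.range n).map (fun l : ℕ => δ - (h - 2 * ((l : A) + 1) + 1) ^ 2)).prod) := by
  have rel2' : h * f = f * h - 2 * f := by linear_combination (norm := noncomm_ring) rel2
  have ef' : e * f = f * e + h := by linear_combination (norm := noncomm_ring) rel3
  -- δ commutes with f
  have dcomm : δ * f = f * δ := by
    rw [hδ]
    have hsq : (h + 1) ^ 2 * f = f * (h - 1) ^ 2 := by
      have := aux_shift f h rel2' (-1) (by noncomm_ring)
      calc (h + 1) ^ 2 * f = (h - (-1)) ^ 2 * f := by noncomm_ring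
        _ = f * (h - (-1 + 2)) ^ 2 := this
        _ = f * (h - 1) ^ 2 := by noncomm_ring
    calc (4 * (f * e) + (h + 1) ^ 2) * f
        = 4 * f * (e * f) + (h + 1) ^ 2 * f := by noncomm_ring
      _ = 4 * f * (f * e + h) + f * (h - 1) ^ 2 := by rw [ef', hsq]
      _ = f * (4 * (f * e) + (h + 1) ^ 2) := by noncomm_ring
  -- key lemma
  have keyL : ∀ m : ℕ, 4 * (e * f ^ (m + 1)) =
      f ^ m * (δ - (h - (2 * (m : A) + 1)) ^ 2) := by
    intro m
    induction m with
    | zero =>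
      rw [hδ, pow_one, pow_zero]
      push_cast
      calc 4 * (e * f) = 4 * (f * e + h) := by rw [ef']
        _ = 1 * (4 * (f * e) + (h + 1) ^ 2 - (h - (2 * 0 + 1)) ^ 2) := by noncomm_ring
    | succ m ih =>
      have hc : (2 * (m : A) + 1) * f = f * (2 * (m : A) + 1) :=
        (((Commute.ofNat_left 2 f).mul_left (Nat.cast_commute m f)).add_left
          (Commute.one_left f)).eq
      have hshift := aux_shift f h rel2' (2 * (m : A) + 1) hc
      have hcast : (h - (2 * ((m : A) + 1) + 1)) ^ 2 = (h - (2 * (m : A) + 1 + 2)) ^ 2 := by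
        noncomm_ring
      push_cast
      rw [hcast]
      calc 4 * (e * f ^ (m + 1 + 1))
          = (4 * (e * f ^ (m + 1))) * f := by rw [pow_succ]; noncomm_ring
        _ = (f ^ m * (δ - (h - (2 * (m : A) + 1)) ^ 2)) * f := by rw [ih]
        _ = f ^ m * (δ * f - (h - (2 * (m : A) + 1)) ^ 2 * f) := by noncomm_ring
        _ = f ^ m * (f * δ - f * (h - (2 * (m : A) + 1 + 2)) ^ 2) := by rw [dcomm, hshift]
        _ = f ^ (m + 1) * (δ - (h - (2 * (m : A) + 1 + 2)) ^ 2) := by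
            rw [pow_succ]; noncomm_ring
  -- main induction
  induction n with
  | zero => simp
  | succ n ih =>
    rw [List.range_succ, List.map_append, List.prod_append, ← ih]
    have hfac : δ - (h - 2 * ((n : A) + 1) + 1) ^ 2 = δ - (h - (2 * (n : A) + 1)) ^ 2 := by
      noncomm_ring
    simp only [List.map_cons, List.map_nil, List.prod_cons, List.prod_nil, mul_one]
    rw [hfac]
    have h4 : ∀ x : A, (4 : A) * x = x * 4 := fun x => (Commute.ofNat_left 4 x).eq
    calc (4 : A) ^ (n + 1) * e ^ (n + 1) * f ^ (n + 1)
        = 4 ^ n * e ^ n * (4 * (e * f ^ (n + 1))) := by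
          noncomm_ring
      _ = 4 ^ n * e ^ n * (f ^ n * (δ - (h - (2 * (n : A) + 1)) ^ 2)) := by rw [keyL n]
      _ = 4 ^ n * e ^ n * f ^ n * (δ - (h - (2 * (n : A) + 1)) ^ 2) := by noncomm_ring
end

section
/- Let A be an associative unital ℚ-algebra and let e, f, h ∈ A satisfy the sl₂ commutation relations h*e − e*h = 2·e, h*f − f*h = −2·f, e*f − f*e = h. Set δ = 4·f*e + (h+1)². Then for every natural number n ≥ 0, 4^n · f^n · e^n = ∏_{l=1}^{n} (δ − (h + 2l − 1)²), where the factors of the product (which pairwise commute) are multiplied in order of increasing l. -/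
/-- In a ℚ-algebra with sl₂-triple `(e, f, h)` and Casimir `δ = 4fe + (h+1)²`,
for every `n ≥ 0`: `4^n · f^n · e^n = ∏_{l=1}^n (δ − (h + 2l − 1)²)` (factors in increasing
order of `l`). -/
theorem stmt6 (A : Type*) [Ring A] [Algebra ℚ A]
    (e f h : A)
    (rel1 : h * e - e * h = 2 * e)
    (rel2 : h * f - f * h = -2 * f)
    (rel3 : e * f - f * e = h)
    (δ : A) (hδ : δ = 4 * (f * e) + (h + 1) ^ 2) (n : ℕ) :
    (4 : A) ^ n * f ^ n * e ^ n =
      (((List.range n).map (fun l : ℕ => δ - (h + 2 * ((l : A) + 1) - 1) ^ 2)).prod) := by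
  -- δ commutes with e
  have hce : e * δ = δ * e := by
    rw [hδ]
    linear_combination (norm := noncomm_ring) 4 * rel3 * e - h * rel1 - rel1 * h
  -- (h+1) * e^m = e^m * (h + 2m + 1)
  have hpow : ∀ m : ℕ, (h + 1) * e ^ m = e ^ m * (h + 2 * (m : A) + 1) := by
    intro m
    induction m with
    | zero => simp
    | succ k ih =>
      have he : h * e = e * h + 2 * e := by linear_combination (norm := noncomm_ring) rel1
      rw [pow_succ', Nat.cast_succ]
      calc (h + 1) * (e * e ^ k) = e * ((h + 1) * e ^ k) + 2 * (e * e ^ k) := by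
            linear_combination (norm := noncomm_ring) he * e ^ k
        _ = e * (e ^ k * (h + 2 * (k : A) + 1)) + 2 * (e * e ^ k) := by rw [ih]
        _ = e * e ^ k * (h + 2 * ((k : A) + 1) + 1) := by noncomm_ring
  -- δ commutes with e^m
  have hcen : ∀ m : ℕ, δ * e ^ m = e ^ m * δ := by
    intro m
    induction m with
    | zero => simp
    | succ k ih =>
      rw [pow_succ]
      calc δ * (e ^ k * e) = (δ * e ^ k) * e := by rw [mul_assoc]
        _ = e ^ k * (δ * e) := by rw [ih, mul_assoc]
        _ = e ^ k * e * δ := by rw [← hce, mul_assoc]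
  induction n with
  | zero => simp
  | succ k ih =>
    have hsq : (h + 1) ^ 2 * e ^ k = e ^ k * (h + 2 * (k : A) + 1) ^ 2 := by
      calc (h + 1) ^ 2 * e ^ k = (h + 1) * ((h + 1) * e ^ k) := by noncomm_ring
        _ = (h + 1) * (e ^ k * (h + 2 * (k : A) + 1)) := by rw [hpow k]
        _ = ((h + 1) * e ^ k) * (h + 2 * (k : A) + 1) := by rw [mul_assoc]
        _ = (e ^ k * (h + 2 * (k : A) + 1)) * (h + 2 * (k : A) + 1) := by rw [hpow k]
        _ = e ^ k * (h + 2 * (k : A) + 1) ^ 2 := by rw [sq, mul_assoc]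
    rw [List.range_succ, List.map_append, List.prod_append, ← ih]
    simp only [List.map_cons, List.map_nil, List.prod_cons, List.prod_nil, mul_one]
    have hfe : (4 : A) * (f * e) = δ - (h + 1) ^ 2 := by rw [hδ]; noncomm_ring
    have key : (4 : A) * (f * e) * e ^ k = e ^ k * δ - e ^ k * (h + 2 * (k : A) + 1) ^ 2 := by
      rw [hfe, sub_mul, hcen, hsq]
    calc (4 : A) ^ (k + 1) * f ^ (k + 1) * e ^ (k + 1)
        = 4 ^ k * f ^ k * (4 * (f * e) * e ^ k) := by
          rw [pow_succ, pow_succ, pow_succ']; noncomm_ring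
      _ = 4 ^ k * f ^ k * (e ^ k * δ - e ^ k * (h + 2 * (k : A) + 1) ^ 2) := by rw [key]
      _ = 4 ^ k * f ^ k * e ^ k * (δ - (h + 2 * ((k : A) + 1) - 1) ^ 2) := by noncomm_ring
end

section
/- Let A be an associative unital ℚ-algebra and let e, f, h ∈ A satisfy the sl₂ commutation relations h*e − e*h = 2·e, h*f − f*h = −2·f, e*f − f*e = h. Then for all natural numbers r, s: (e^r/r!) · (f^s/s!) = ∑_{k=0}^{min(r,s)} (f^{s−k}/(s−k)!) · binom(h − s − r + 2k, k) · (e^{r−k}/(r−k)!), where binom(h − s − r + 2k, k) = (k!)^{−1} · ∏_{m=0}^{k−1} (h − (s + r − 2k + m)·1). -/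
/-!
Write `E r = e ^ r / r!` and `F s = f ^ s / s!`. The relations give
`e * binom y k = binom (y - 2) k * e` for `y = h - c` and
`e * F j = F j * e + F (j - 1) * (h - (j - 1))`, and `e * E r = (r + 1) E (r + 1)`. So the
identity follows by induction on `r`: multiply the identity for `r` on the left by `e` and move `e`
to the right through each summand. Two families of terms appear, and consecutive members of them
combine, by Pascal's rule and `binom y k * (y - k) = (k + 1) binom y (k + 1)`, into `r + 1` times
the summands for `r + 1`.
-/

open Polynomial Finset
open scoped Nat

section Binom

variable {A : Type*} [Ring A]

theorem SemiconjBy.smeval {a x y : A} (hxy : SemiconjBy a x y) (p : ℤ[X]) :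
    SemiconjBy a (p.smeval x) (p.smeval y) := by
  induction p using Polynomial.induction_on' with
  | add p q hp hq => simpa only [smeval_add] using hp.add_right hq
  | monomial n c => simpa only [smeval_monomial] using (hxy.pow_right n).smul_right c

theorem descPochhammer_smeval_eq_prod (y : A) (k : ℕ) :
    (descPochhammer ℤ k).smeval y = ((List.range k).map fun m : ℕ => y - m).prod := by
  induction k with
  | zero => simp
  | succ k ih =>
    rw [descPochhammer_succ_right, smeval_mul, ih, List.range_succ, List.map_append,
      List.prod_append]
    simp [smeval_sub, smeval_X, smeval_natCast]

variable [Algebra ℚ A]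

noncomputable def binom (y : A) (k : ℕ) : A := (k ! : ℚ)⁻¹ • (descPochhammer ℤ k).smeval y

@[simp]
theorem binom_zero_right (y : A) : binom y 0 = 1 := by
  simp [binom]

theorem binom_commute_self (y : A) (k : ℕ) : Commute (binom y k) y :=
  (smeval_commute_left ℤ _ (Commute.refl y)).smul_left _

theorem factorial_smul_binom (y : A) (k : ℕ) :
    (k ! : ℚ) • binom y k = (descPochhammer ℤ k).smeval y :=
  smul_inv_smul₀ (by positivity) _

theorem binom_succ_succ (y : A) (k : ℕ) :
    binom (y + 1) (k + 1) = binom y k + binom y (k + 1) := by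
  apply smul_right_injective A (r := ((k + 1)! : ℚ)) (by positivity)
  dsimp only
  rw [smul_add, factorial_smul_binom, factorial_smul_binom, Ring.descPochhammer_succ_succ_smeval,
    Nat.factorial_succ, Nat.cast_mul, mul_smul, factorial_smul_binom, Nat.cast_smul_eq_nsmul]

theorem binom_mul_sub (y : A) (k : ℕ) : binom y k * (y - k) = (k + 1 : ℚ) • binom y (k + 1) := by
  apply smul_right_injective A (r := (k ! : ℚ)) (by positivity)
  dsimp only
  rw [← smul_mul_assoc, factorial_smul_binom, smul_smul,
    show (k ! : ℚ) * (k + 1) = ((k + 1)! : ℚ) by push_cast [Nat.factorial_succ]; ring,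
    factorial_smul_binom, descPochhammer_succ_right, smeval_mul]
  simp [smeval_sub, smeval_X, smeval_natCast]

theorem SemiconjBy.binom {a x y : A} (hxy : SemiconjBy a x y) (k : ℕ) :
    SemiconjBy a (binom x k) (binom y k) :=
  (hxy.smeval _).smul_right _

theorem smul_binom_succ_add_mul_binom (y : A) (k : ℕ) (t : ℤ) :
    (t : ℚ) • binom y (k + 1) + (y + (t + 1 : ℤ)) * binom y k =
      ((t + k + 1 : ℤ) : ℚ) • binom (y + 1) (k + 1) := by
  have hmul : (y + (t + 1 : ℤ)) * binom y k =
      binom y k * (y - k) + ((t + k + 1 : ℤ) : ℚ) • binom y k := by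
    rw [add_mul, ← (binom_commute_self y k).eq, mul_sub, ← Int.cast_natCast,
      ← zsmul_eq_mul', ← zsmul_eq_mul, Int.cast_smul_eq_zsmul]
    module
  rw [hmul, binom_mul_sub, binom_succ_succ]
  push_cast
  module

end Binom

section DividedPow

variable {A : Type*} [Ring A] [Algebra ℚ A]

/-- Vanishing at negative `n` makes the sum over `k ≤ r` below agree with the sum over
`k ≤ min r s`, so the induction on `r` needs no case split. -/
noncomputable def dividedPow (x : A) (n : ℤ) : A :=
  if n < 0 then 0 else (n.toNat ! : ℚ)⁻¹ • x ^ n.toNat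

theorem dividedPow_natCast (x : A) (n : ℕ) : dividedPow x n = (n ! : ℚ)⁻¹ • x ^ n := by
  simp [dividedPow]

@[simp]
theorem dividedPow_zero (x : A) : dividedPow x 0 = 1 := by
  simp [dividedPow]

theorem dividedPow_of_neg (x : A) {n : ℤ} (hn : n < 0) : dividedPow x n = 0 := if_pos hn

theorem mul_dividedPow (x : A) (n : ℤ) :
    x * dividedPow x n = ((n + 1 : ℤ) : ℚ) • dividedPow x (n + 1) := by
  rcases lt_trichotomy n (-1) with hn | rfl | hn
  · rw [dividedPow_of_neg x (by omega), dividedPow_of_neg x (by omega), mul_zero, smul_zero]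
  · simp [dividedPow_of_neg]
  · lift n to ℕ using (by omega)
    rw [← Nat.cast_succ, dividedPow_natCast, dividedPow_natCast, mul_smul_comm, ← pow_succ',
      smul_smul]
    congr 1
    push_cast [Nat.factorial_succ]
    field_simp

end DividedPow

namespace Sl2Triple

variable {A : Type*} [Ring A] {e f h : A}

theorem semiconjBy_e (he : h * e - e * h = 2 * e) (c : ℤ) : SemiconjBy e (h - c) (h - c - 2) := by
  have : e * h = h * e - 2 * e := by rw [← he]; abel
  rw [SemiconjBy, mul_sub, this, ← (Int.cast_commute c e).eq]
  noncomm_ring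

variable [Algebra ℚ A]

theorem e_mul_f_pow_succ (hf : h * f - f * h = -2 * f) (hef : e * f - f * e = h) (n : ℕ) :
    e * f ^ (n + 1) = f ^ (n + 1) * e + ((n + 1 : ℕ) : ℚ) • (f ^ n * (h - n)) := by
  induction n with
  | zero => simp [← hef]
  | succ n ih =>
    have hef' : e * f = f * e + h := by rw [← hef]; abel
    have hf' : (h - n) * f = f * (h - (n + 2 : ℕ)) := by
      have : h * f = f * h - 2 * f := by rw [sub_eq_add_neg, ← neg_mul, ← hf]; abel
      rw [sub_mul, this, (Nat.cast_commute n f).eq]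
      push_cast
      noncomm_ring
    rw [pow_succ _ (n + 1), ← mul_assoc, ih, add_mul, smul_mul_assoc, mul_assoc, mul_assoc, hef',
      hf', ← mul_assoc (f ^ n), ← pow_succ, mul_add, ← mul_assoc, ← pow_succ]
    simp only [mul_sub, ← nsmul_eq_mul', ← Nat.cast_smul_eq_nsmul ℚ]
    push_cast
    module

theorem e_mul_dividedPow_f (hf : h * f - f * h = -2 * f) (hef : e * f - f * e = h) (j : ℤ) :
    e * dividedPow f j = dividedPow f j * e + dividedPow f (j - 1) * (h - ((j - 1 : ℤ) : A)) := by
  rcases lt_trichotomy j 0 with hj | rfl | hj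
  · simp [dividedPow_of_neg f hj, dividedPow_of_neg f (by omega : j - 1 < 0)]
  · simp [dividedPow_of_neg]
  · obtain ⟨n, rfl⟩ : ∃ n : ℕ, j = n + 1 := ⟨(j - 1).toNat, by omega⟩
    rw [add_sub_cancel_right, ← Nat.cast_succ, dividedPow_natCast, dividedPow_natCast,
      mul_smul_comm, e_mul_f_pow_succ hf hef, smul_add, smul_smul, smul_mul_assoc, smul_mul_assoc,
      Int.cast_natCast]
    congr 2
    push_cast [Nat.factorial_succ]
    field_simp

theorem e_mul_summand (he : h * e - e * h = 2 * e) (hf : h * f - f * h = -2 * f)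
    (hef : e * f - f * e = h) (j c : ℤ) (k : ℕ) (x : A) :
    e * (dividedPow f j * binom (h - c) k * x) =
      dividedPow f j * binom (h - c - 2) k * (e * x) +
        dividedPow f (j - 1) * ((h - ((j - 1 : ℤ) : A)) * binom (h - c) k) * x := by
  rw [← mul_assoc, ← mul_assoc, e_mul_dividedPow_f hf hef, add_mul, mul_assoc _ e,
    ((semiconjBy_e he c).binom k).eq]
  noncomm_ring

noncomputable def summand (e f h : A) (s : ℤ) (r k : ℕ) : A :=
  dividedPow f (s - k) * binom (h - ((s + r - 2 * k : ℤ) : A)) k * dividedPow e (r - k)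

theorem e_mul_sum_summand (he : h * e - e * h = 2 * e) (hf : h * f - f * h = -2 * f)
    (hef : e * f - f * e = h) (s : ℤ) (r : ℕ) :
    e * ∑ k ∈ range (r + 1), summand e f h s r k =
      ((r + 1 : ℕ) : ℚ) • ∑ k ∈ range (r + 2), summand e f h s (r + 1) k := by
  -- `U k`: `e` moved past `f ^ (s - k)`; `V k`: the commutator term. Pascal's rule for `binom`
  -- merges `U (k + 1)` and `V k` into one summand of the next row.
  set U : ℕ → A := fun k => dividedPow f (s - k) * binom (h - ((s + r - 2 * k : ℤ) : A) - 2) k *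
    (e * dividedPow e (r - k)) with hU
  set V : ℕ → A := fun k => dividedPow f (s - k - 1) *
    ((h - ((s - k - 1 : ℤ) : A)) * binom (h - ((s + r - 2 * k : ℤ) : A)) k) * dividedPow e (r - k)
    with hV
  have hUV (k : ℕ) : e * summand e f h s r k = U k + V k := e_mul_summand he hf hef _ _ k _
  have hU_zero : U 0 = ((r + 1 : ℕ) : ℚ) • summand e f h s (r + 1) 0 := by
    simp only [hU, summand, binom_zero_right, mul_dividedPow, Nat.cast_zero, sub_zero, mul_one]
    push_cast
    rw [mul_smul_comm]
  have hU_last : U (r + 1) = 0 := by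
    simp only [hU, dividedPow_of_neg e (by omega : (r : ℤ) - (r + 1 : ℕ) < 0), mul_zero]
  have hUV_succ (k : ℕ) :
      U (k + 1) + V k = ((r + 1 : ℕ) : ℚ) • summand e f h s (r + 1) (k + 1) := by
    obtain ⟨y, hy⟩ : ∃ y, h - ((s + r - 2 * k : ℤ) : A) = y := ⟨_, rfl⟩
    have hy_sub : h - ((s + r - 2 * (k + 1 : ℕ) : ℤ) : A) - 2 = y := by
      rw [← hy]; push_cast; rw [mul_add, mul_one]; abel
    have hy_add : h - ((s + (r + 1 : ℕ) - 2 * (k + 1 : ℕ) : ℤ) : A) = y + 1 := by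
      rw [← hy]; push_cast; noncomm_ring
    have hh : h - ((s - k - 1 : ℤ) : A) = y + ((r - k + 1 : ℤ) : A) := by
      rw [← hy]; push_cast; noncomm_ring
    have hs : s - ((k + 1 : ℕ) : ℤ) = s - k - 1 := by push_cast; ring
    have hr : ((r + 1 : ℕ) : ℤ) - (k + 1 : ℕ) = r - k := by push_cast; ring
    have he_mul :
        e * dividedPow e (r - (k + 1 : ℕ)) = ((r - k : ℤ) : ℚ) • dividedPow e (r - k) := by
      rw [mul_dividedPow, show (r : ℤ) - (k + 1 : ℕ) + 1 = r - k by push_cast; ring]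
    have hcoeff : ((r + 1 : ℕ) : ℚ) = ((r - k + k + 1 : ℤ) : ℚ) := by push_cast; ring
    simp only [hU, hV, summand]
    rw [hy_sub, hy_add, hh, hy, hs, hr, he_mul, hcoeff, ← smul_mul_assoc, ← mul_smul_comm,
      ← smul_binom_succ_add_mul_binom]
    simp only [mul_add, add_mul, mul_smul_comm, smul_mul_assoc]
  calc e * ∑ k ∈ range (r + 1), summand e f h s r k
      = ∑ k ∈ range (r + 1), (U (k + 1) + V k) + U 0 := by
        rw [mul_sum, sum_congr rfl fun k _ => hUV k, sum_add_distrib, sum_add_distrib,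
          ← add_zero (∑ k ∈ range (r + 1), U k), ← hU_last, ← sum_range_succ, sum_range_succ']
        abel
    _ = ((r + 1 : ℕ) : ℚ) • ∑ k ∈ range (r + 2), summand e f h s (r + 1) k := by
        rw [smul_sum, sum_range_succ' _ (r + 1), hU_zero, sum_congr rfl fun k _ => hUV_succ k]

theorem dividedPow_e_mul_dividedPow_f (he : h * e - e * h = 2 * e) (hf : h * f - f * h = -2 * f)
    (hef : e * f - f * e = h) (s : ℤ) (r : ℕ) :
    dividedPow e r * dividedPow f s = ∑ k ∈ range (r + 1), summand e f h s r k := by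
  induction r with
  | zero => simp [summand]
  | succ r ih =>
    apply smul_right_injective A (r := ((r + 1 : ℕ) : ℚ)) (by positivity)
    dsimp only
    rw [← e_mul_sum_summand he hf hef, ← ih, ← mul_assoc, mul_dividedPow, smul_mul_assoc]
    push_cast
    rfl

theorem summand_eq {s r k : ℕ} (hks : k ≤ s) (hkr : k ≤ r) :
    summand e f h s r k =
      ((s - k)! : ℚ)⁻¹ • f ^ (s - k) *
        ((k ! : ℚ)⁻¹ • ((List.range k).map fun m : ℕ => h - ((s + r - 2 * k + m : ℕ) : A)).prod) *
        ((r - k)! : ℚ)⁻¹ • e ^ (r - k) := by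
  rw [summand, ← Nat.cast_sub hks, ← Nat.cast_sub hkr, dividedPow_natCast, dividedPow_natCast,
    binom, descPochhammer_smeval_eq_prod]
  congr 4
  refine List.map_congr_left fun m _ => ?_
  rw [sub_sub]
  push_cast [Nat.cast_sub (by omega : 2 * k ≤ s + r)]
  rfl

theorem summand_eq_zero {s r k : ℕ} (hsk : s < k) : summand e f h s r k = 0 := by
  rw [summand, dividedPow_of_neg f (by omega), zero_mul, zero_mul]

end Sl2Triple

/-- In a ℚ-algebra with sl₂-triple `(e, f, h)`, for all `r, s : ℕ`:
`(e^r/r!)·(f^s/s!) = ∑_{k=0}^{min r s} (f^{s−k}/(s−k)!) · binom(h−s−r+2k, k) · (e^{r−k}/(r−k)!)`,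
where `binom(h−s−r+2k, k) = (k!)⁻¹ · ∏_{m=0}^{k−1} (h − (s+r−2k+m)·1)`. -/
theorem stmt7 (A : Type*) [Ring A] [Algebra ℚ A]
    (e f h : A)
    (rel1 : h * e - e * h = 2 * e)
    (rel2 : h * f - f * h = -2 * f)
    (rel3 : e * f - f * e = h)
    (r s : ℕ) :
    ((r.factorial : ℚ))⁻¹ • e ^ r * ((s.factorial : ℚ))⁻¹ • f ^ s =
      ∑ k ∈ Finset.range (min r s + 1),
        (((s - k).factorial : ℚ))⁻¹ • f ^ (s - k) *
          (((k.factorial : ℚ))⁻¹ •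
            (((List.range k).map (fun m : ℕ => h - ((s + r - 2 * k + m : ℕ) : A))).prod)) *
          (((r - k).factorial : ℚ))⁻¹ • e ^ (r - k) := by
  rw [← dividedPow_natCast, ← dividedPow_natCast,
    Sl2Triple.dividedPow_e_mul_dividedPow_f rel1 rel2 rel3]
  calc ∑ k ∈ range (r + 1), Sl2Triple.summand e f h s r k
      = ∑ k ∈ range (min r s + 1), Sl2Triple.summand e f h s r k := by
        refine (sum_subset ?_ fun k hk hk' => Sl2Triple.summand_eq_zero ?_).symm
        · exact range_subset_range.mpr (by omega)
        · simp only [mem_range] at hk hk'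
          omega
    _ = _ := sum_congr rfl fun k hk => by
        rw [mem_range] at hk
        exact Sl2Triple.summand_eq (by omega) (by omega)
end

section
/- Let p ≥ 3 be a prime and let A be an associative unital algebra over 𝔽_p = ZMod p. Suppose e, f, h ∈ A satisfy the sl₂ commutation relations h*e − e*h = 2·e, h*f − f*h = −2·f, e*f − f*e = h, together with the restricted relations e^p = 0, f^p = 0, h^p = h. Set δ = 4·f*e + (h+1)². Then δ^p − 2·δ^{(p+1)/2} + δ = 0. -/
/-! Set `t = h + 1`. In a commutative `𝔽_p`-algebra, adjoining a square root `x` of `u` factors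
`u - (t + a)²` as `(x - t - a)(x + t + a)`, and `∏_{a ∈ 𝔽_p} (s - a) = s^p - s` then gives
`∏_{j<p} (u - (t + 2j)²) = u^p - 2u^{(p+1)/2} + u - (t^p - t)²`.
Since `δ` and `t` commute, this applies to `u = δ`. On the other hand `e t = (t - 2) e` makes the
ordered product telescope, `∏_{j<k} (δ - (t + 2j)²) = 4^k f^k e^k`, which vanishes for `k = p`;
together with `t^p = t` this is the claim. -/

open Polynomial Finset

theorem AdjoinRoot.of_injective_of_monic {R : Type*} [CommRing R] {f : R[X]} (hf : f.Monic)
    (hdeg : 0 < f.degree) : Function.Injective (AdjoinRoot.of f) := by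
  refine (injective_iff_map_eq_zero _).mpr fun r hr => ?_
  by_contra h0
  exact mk_ne_zero_of_degree_lt hf (C_ne_zero.mpr h0) (degree_C_le.trans_lt hdeg) hr

theorem ZMod.prod_eq_prod_range {M : Type*} [CommMonoid M] {n : ℕ} [NeZero n] (F : ZMod n → M) :
    ∏ a, F a = ∏ j ∈ range n, F j :=
  prod_nbij' ZMod.val Nat.cast (by simp [ZMod.val_lt]) (by simp) (by simp)
    (fun _ hj => ZMod.val_cast_of_lt (mem_range.mp hj)) (by simp)

section ZModAlgebra

variable {p : ℕ} [Fact p.Prime]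

theorem ZMod.prod_eq_prod_range_two_mul {M : Type*} [CommMonoid M] (hp : p ≠ 2)
    (F : ZMod p → M) : ∏ a, F a = ∏ j ∈ range p, F (2 * j) := by
  have h2 : (2 : ZMod p) ≠ 0 := Ring.two_ne_zero (by rwa [ZMod.ringChar_zmod_n])
  rw [(Fintype.prod_equiv (Equiv.mulLeft₀ 2 h2) _ _ fun _ => rfl).symm, ZMod.prod_eq_prod_range]
  simp

theorem ZMod.prod_X_sub_C : ∏ a : ZMod p, (X - C a) = (X : (ZMod p)[X]) ^ p - X := by
  have hp1 : 1 < p := (Fact.out : p.Prime).one_lt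
  have hcard : Fintype.card (ZMod p) = p := ZMod.card p
  have hroots : ((X : (ZMod p)[X]) ^ p - X).roots = univ.val := by
    simpa [hcard] using FiniteField.roots_X_pow_card_sub_X (ZMod p)
  have hmonic : ((X : (ZMod p)[X]) ^ p - X).Monic :=
    (monic_X_pow p).sub_of_left (by rw [degree_X, degree_X_pow]; exact_mod_cast hp1)
  have hdeg := FiniteField.X_pow_card_sub_X_natDegree_eq (ZMod p) hp1
  have := prod_multiset_X_sub_C_of_monic_of_roots_card_eq hmonic (by simp [hroots, hdeg, hcard])
  rwa [hroots] at this

theorem add_pow_prime_of_commute {A : Type*} [Ring A] [Algebra (ZMod p) A] {a b : A}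
    (hab : Commute a b) : (a + b) ^ p = a ^ p + b ^ p := by
  rcases subsingleton_or_nontrivial A with hA | hA
  · exact Subsingleton.elim _ _
  have := charP_of_injective_algebraMap' (ZMod p) (A := A) p
  exact add_pow_char_of_commute p hab

section CommRing

variable {S : Type*} [CommRing S] [Algebra (ZMod p) S]

theorem prod_sub_algebraMap (s : S) :
    ∏ a : ZMod p, (s - algebraMap (ZMod p) S a) = s ^ p - s := by
  simpa [map_prod] using congrArg (aeval s) (ZMod.prod_X_sub_C (p := p))

theorem prod_add_algebraMap (s : S) :
    ∏ a : ZMod p, (s + algebraMap (ZMod p) S a) = s ^ p - s := by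
  rw [← prod_sub_algebraMap s]
  exact Fintype.prod_equiv (Equiv.neg (ZMod p)) _ _ fun a => by simp [sub_eq_add_neg]

theorem prod_sq_sub_sq_add_algebraMap (x t : S) :
    ∏ a : ZMod p, (x ^ 2 - (t + algebraMap (ZMod p) S a) ^ 2)
      = (x ^ p - x) ^ 2 - (t ^ p - t) ^ 2 := by
  rcases subsingleton_or_nontrivial S with hS | hS
  · exact Subsingleton.elim _ _
  have := charP_of_injective_algebraMap' (ZMod p) (A := S) p
  calc ∏ a : ZMod p, (x ^ 2 - (t + algebraMap (ZMod p) S a) ^ 2)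
      = ∏ a : ZMod p, ((x - t - algebraMap (ZMod p) S a) * (x + t + algebraMap (ZMod p) S a)) :=
        prod_congr rfl fun _ _ => by ring
    _ = ((x - t) ^ p - (x - t)) * ((x + t) ^ p - (x + t)) := by
        rw [prod_mul_distrib, prod_sub_algebraMap, prod_add_algebraMap]
    _ = (x ^ p - x) ^ 2 - (t ^ p - t) ^ 2 := by
        rw [sub_pow_char, add_pow_char]
        ring

theorem prod_sub_sq_add_algebraMap (hp : p ≠ 2) (u t : S) :
    ∏ a : ZMod p, (u - (t + algebraMap (ZMod p) S a) ^ 2)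
      = u ^ p - 2 * u ^ ((p + 1) / 2) + u - (t ^ p - t) ^ 2 := by
  rcases subsingleton_or_nontrivial S with hS | hS
  · exact Subsingleton.elim _ _
  have hodd : Odd p := (Fact.out : p.Prime).odd_of_ne_two hp
  have hmonic : (X ^ 2 - C u).Monic := monic_X_pow_sub_C u two_ne_zero
  set x := AdjoinRoot.root (X ^ 2 - C u)
  set ι := IsScalarTower.toAlgHom (ZMod p) S (AdjoinRoot (X ^ 2 - C u))
  have hι : Function.Injective ι := AdjoinRoot.of_injective_of_monic hmonic
    (by rw [degree_X_pow_sub_C two_pos]; norm_num)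
  have hx : x ^ 2 = ι u := by
    have := AdjoinRoot.eval₂_root (X ^ 2 - C u)
    rwa [eval₂_sub, eval₂_X_pow, eval₂_C, sub_eq_zero] at this
  apply hι
  simp only [map_prod, map_sub, map_add, map_mul, map_pow, map_ofNat, AlgHom.commutes]
  rw [← hx, prod_sq_sub_sq_add_algebraMap]
  obtain ⟨k, rfl⟩ := hodd
  rw [show (2 * k + 1 + 1) / 2 = k + 1 by omega]
  ring

end CommRing

open IsMulCommutative in
theorem Commute.list_prod_sub_sq_add_two_mul {A : Type*} [Ring A] [Algebra (ZMod p) A]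
    (hp : p ≠ 2) {u t : A} (hut : Commute u t) :
    ((List.range p).map fun j : ℕ => u - (t + 2 * j) ^ 2).prod
      = u ^ p - 2 * u ^ ((p + 1) / 2) + u - (t ^ p - t) ^ 2 := by
  let B := Algebra.adjoin (ZMod p) {u, t}
  have : IsMulCommutative B := Algebra.isMulCommutative_adjoin _ <| by
    simp only [Set.mem_insert_iff, Set.mem_singleton_iff]
    rintro a (rfl | rfl) b (rfl | rfl) <;> first | rfl | exact hut | exact hut.symm
  let U : B := ⟨u, Algebra.subset_adjoin (by simp)⟩
  let T : B := ⟨t, Algebra.subset_adjoin (by simp)⟩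
  have key := prod_sub_sq_add_algebraMap hp U T
  rw [ZMod.prod_eq_prod_range_two_mul hp] at key
  simp only [map_mul, map_ofNat, map_natCast] at key
  have := congrArg B.val key
  simp only [Finset.prod_eq_multiset_prod, Finset.range_val, Multiset.range, Multiset.map_coe,
    Multiset.prod_coe, map_list_prod, List.map_map, Function.comp_def, map_sub, map_add, map_mul,
    map_pow, map_ofNat, map_natCast] at this
  exact this

end ZModAlgebra

section Sl2Triple

variable {A : Type*} [Ring A] {e f h : A}

def casimir (e f h : A) : A := 4 * (f * e) + (h + 1) ^ 2

theorem pow_mul_add_two_mul (rel1 : h * e - e * h = 2 * e) (k : ℕ) :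
    e ^ k * (h + 2 * k) = h * e ^ k := by
  induction k with
  | zero => simp
  | succ n ih =>
    have hn : e * (n : A) = n * e := (Nat.cast_commute n e).symm
    have step : e * (h + 2 * (n + 1 : ℕ)) = (h + 2 * n) * e := by
      push_cast
      linear_combination (norm := noncomm_ring) -rel1 + 2 * hn
    rw [pow_succ, mul_assoc, step, ← mul_assoc, ih, mul_assoc]

theorem commute_casimir_e (rel1 : h * e - e * h = 2 * e) (rel3 : e * f - f * e = h) :
    Commute (casimir e f h) e := by
  unfold Commute SemiconjBy casimir
  linear_combination (norm := noncomm_ring)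
    -4 * rel3 * e - 2 * rel1 + (h + 1) * rel1 + rel1 * (h + 1)

theorem commute_casimir_h_add_one (rel1 : h * e - e * h = 2 * e) (rel2 : h * f - f * h = -2 * f) :
    Commute (casimir e f h) (h + 1) := by
  unfold Commute SemiconjBy casimir
  linear_combination (norm := noncomm_ring) -4 * rel2 * e - 4 * f * rel1

theorem pow_mul_casimir_sub_sq (rel1 : h * e - e * h = 2 * e) (rel3 : e * f - f * e = h) (k : ℕ) :
    e ^ k * (casimir e f h - (h + 1 + 2 * k) ^ 2) = 4 * (f * e) * e ^ k := by
  have hshift : e ^ k * (h + 1 + 2 * k) = (h + 1) * e ^ k := by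
    rw [add_right_comm, mul_add, pow_mul_add_two_mul rel1, mul_one, add_mul, one_mul]
  have hsq : e ^ k * (h + 1 + 2 * k) ^ 2 = (h + 1) ^ 2 * e ^ k := by
    rw [sq, ← mul_assoc, hshift, mul_assoc, hshift, ← mul_assoc, ← sq]
  rw [mul_sub, hsq, ← ((commute_casimir_e rel1 rel3).pow_right k).eq, casimir]
  noncomm_ring

theorem list_prod_casimir_sub_sq (rel1 : h * e - e * h = 2 * e) (rel3 : e * f - f * e = h)
    (k : ℕ) : ((List.range k).map fun j : ℕ => casimir e f h - (h + 1 + 2 * j) ^ 2).prod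
      = 4 ^ k * (f ^ k * e ^ k) := by
  induction k with
  | zero => simp
  | succ n ih =>
    rw [List.prod_range_succ, ih, mul_assoc, mul_assoc, pow_mul_casimir_sub_sq rel1 rel3,
      pow_succ, pow_succ, pow_succ']
    noncomm_ring

end Sl2Triple

theorem stmt8_general (p : ℕ) (hp : p.Prime) (hp3 : 3 ≤ p)
    (A : Type*) [Ring A] [Algebra (ZMod p) A]
    (e f h : A)
    (rel1 : h * e - e * h = 2 * e)
    (rel2 : h * f - f * h = -2 * f)
    (rel3 : e * f - f * e = h)
    (rf : f ^ p = 0) (rh : h ^ p = h)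
    (δ : A) (hδ : δ = 4 * (f * e) + (h + 1) ^ 2) :
    δ ^ p - 2 * δ ^ ((p + 1) / 2) + δ = 0 := by
  have : Fact p.Prime := ⟨hp⟩
  have hp2 : p ≠ 2 := by omega
  have hh : (h + 1) ^ p = h + 1 := by
    rw [add_pow_prime_of_commute (Commute.one_right h), rh, one_pow]
  have key := (commute_casimir_h_add_one rel1 rel2).list_prod_sub_sq_add_two_mul hp2
  rw [list_prod_casimir_sub_sq rel1 rel3, rf, hh, sub_self] at key
  rw [hδ, ← casimir]
  simpa using key.symm

/-- For `p ≥ 3` prime and an `𝔽_p`-algebra `A` with a restricted sl₂-triple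
`(e, f, h)`, the Casimir `δ = 4fe + (h+1)²` satisfies `δ^p − 2δ^{(p+1)/2} + δ = 0`. -/
theorem stmt8 (p : ℕ) (hp : p.Prime) (hp3 : 3 ≤ p)
    (A : Type*) [Ring A] [Algebra (ZMod p) A]
    (e f h : A)
    (rel1 : h * e - e * h = 2 * e)
    (rel2 : h * f - f * h = -2 * f)
    (rel3 : e * f - f * e = h)
    (re : e ^ p = 0) (rf : f ^ p = 0) (rh : h ^ p = h)
    (δ : A) (hδ : δ = 4 * (f * e) + (h + 1) ^ 2) :
    δ ^ p - 2 * δ ^ ((p + 1) / 2) + δ = 0 :=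
  stmt8_general p hp hp3 A e f h rel1 rel2 rel3 rf rh δ hδ
end

section
/- Let p ≥ 3 be a prime, k ≥ 0 a natural number, and n any integer. Then the generalized binomial coefficients satisfy binom(n, p^k) − binom(n − 2·p^k, p^k) ≡ 2 (mod p). -/
/-!
By Vandermonde, `binom(m + p^k, p^k) = ∑_{i + j = p^k} binom(m, i) binom(p^k, j)`, and
`p ∣ binom(p^k, j)` for `0 < j < p^k`, so modulo `p` only `i = p^k` and `i = 0` survive:
`binom(m + p^k, p^k) ≡ binom(m, p^k) + 1`. Shifting twice by `p^k` gives the claim.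
-/

namespace Int

theorem choose_add_modEq_of_dvd_choose {d : ℤ} {q : ℕ} (hq : q ≠ 0)
    (hdvd : ∀ j, j ≠ 0 → j ≠ q → d ∣ (q.choose j : ℤ)) (m : ℤ) :
    Ring.choose (m + q) q ≡ Ring.choose m q + 1 [ZMOD d] := by
  obtain ⟨r, rfl⟩ := Nat.exists_eq_succ_of_ne_zero hq
  rw [Ring.add_choose_eq _ (Commute.all _ _), Finset.Nat.sum_antidiagonal_eq_sum_range_succ_mk,
    Finset.sum_range_succ, Finset.sum_range_succ']
  simp only [Nat.sub_self, Nat.sub_zero, Ring.choose_natCast, Ring.choose_zero_right,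
    Nat.choose_self, Nat.cast_one, mul_one]
  have hmiddle : ∑ i ∈ Finset.range r,
      Ring.choose m (i + 1) * ((r + 1).choose (r + 1 - (i + 1)) : ℤ) ≡ 0 [ZMOD d] := by
    refine Int.modEq_zero_iff_dvd.mpr <| Finset.dvd_sum fun i hi => Dvd.dvd.mul_left ?_ _
    have hi := Finset.mem_range.mp hi
    exact hdvd _ (by omega) (by omega)
  simpa [add_comm] using (hmiddle.add_right 1).add_left (Ring.choose m (r + 1))

variable {p : ℕ}

theorem choose_add_prime_pow_modEq (hp : p.Prime) (k : ℕ) (m : ℤ) :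
    Ring.choose (m + (p : ℤ) ^ k) (p ^ k) ≡ Ring.choose m (p ^ k) + 1 [ZMOD p] := by
  have h := choose_add_modEq_of_dvd_choose (d := p) (pow_ne_zero k hp.ne_zero)
    (fun j hj0 hjk => by exact_mod_cast hp.dvd_choose_pow hj0 hjk) m
  rwa [Nat.cast_pow] at h

theorem choose_add_mul_prime_pow_modEq (hp : p.Prime) (k a : ℕ) (m : ℤ) :
    Ring.choose (m + a * (p : ℤ) ^ k) (p ^ k) ≡ Ring.choose m (p ^ k) + a [ZMOD p] := by
  induction a with
  | zero => simp
  | succ a ih =>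
    calc Ring.choose (m + (a + 1 : ℕ) * (p : ℤ) ^ k) (p ^ k)
        = Ring.choose (m + a * (p : ℤ) ^ k + (p : ℤ) ^ k) (p ^ k) := by push_cast; ring_nf
      _ ≡ Ring.choose (m + a * (p : ℤ) ^ k) (p ^ k) + 1 [ZMOD p] :=
        choose_add_prime_pow_modEq hp k _
      _ ≡ Ring.choose m (p ^ k) + (a + 1 : ℕ) [ZMOD p] := by
        push_cast; rw [← add_assoc]; exact ih.add_right 1

end Int

theorem stmt10_general (p : ℕ) (hp : p.Prime) (k : ℕ) (n : ℤ) :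
    Ring.choose n (p ^ k) - Ring.choose (n - 2 * (p : ℤ) ^ k) (p ^ k) ≡ 2 [ZMOD (p : ℤ)] := by
  have h := Int.choose_add_mul_prime_pow_modEq hp k 2 (n - 2 * (p : ℤ) ^ k)
  rw [Nat.cast_two, sub_add_cancel] at h
  simpa using h.sub_right (Ring.choose (n - 2 * (p : ℤ) ^ k) (p ^ k))

/-- For `p ≥ 3` prime, `k : ℕ`, and any integer `n`, the generalized binomial
coefficients satisfy `binom(n, p^k) − binom(n − 2p^k, p^k) ≡ 2 (mod p)`. -/
theorem stmt10 (p : ℕ) (hp : p.Prime) (hp3 : 3 ≤ p) (k : ℕ) (n : ℤ) :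
    Ring.choose n (p ^ k) - Ring.choose (n - 2 * (p : ℤ) ^ k) (p ^ k) ≡ 2 [ZMOD (p : ℤ)] :=
  stmt10_general p hp k n
end

section
/- Let p be a prime, k ≥ 0 and r ≥ 1 natural numbers, and let i be a natural number with 1 ≤ i ≤ p^k. Then the binomial coefficient binom(p^{k+r} − i, p^k − i) ≡ 1 (mod p). -/
/-- For `p` prime, `k ≥ 0`, `r ≥ 1`, and `1 ≤ i ≤ p^k`,
`binom(p^{k+r} − i, p^k − i) ≡ 1 (mod p)`. -/
theorem stmt11 (p : ℕ) (hp : p.Prime) (k r : ℕ) (hr : 1 ≤ r) (i : ℕ)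
    (hi1 : 1 ≤ i) (hi2 : i ≤ p ^ k) :
    Nat.choose (p ^ (k + r) - i) (p ^ k - i) ≡ 1 [MOD p] := by
  haveI : Fact p.Prime := ⟨hp⟩
  set m := p ^ k - i with hmdef
  set c := p ^ r - 1 with hcdef
  have hpk : 1 ≤ p ^ k := Nat.one_le_pow _ _ hp.pos
  have hpr : 1 ≤ p ^ r := Nat.one_le_pow _ _ hp.pos
  have hm : m < p ^ k := by omega
  have hc : p ^ k * c = p ^ k * p ^ r - p ^ k := by
    rw [hcdef, Nat.mul_sub, mul_one]
  have hn : p ^ (k + r) - i = m + p ^ k * c := by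
    have hkr : p ^ (k + r) = p ^ k * p ^ r := pow_add p k r
    have : p ^ k ≤ p ^ k * p ^ r := Nat.le_mul_of_pos_right _ (by omega)
    omega
  have hhead : (m + p ^ k * c) / p ^ k = c := by
    rw [Nat.add_mul_div_left _ _ (Nat.pos_of_ne_zero (by omega)),
      Nat.div_eq_of_lt hm, Nat.zero_add]
  have hprod : ∀ j ∈ Finset.range k,
      Nat.choose ((m + p ^ k * c) / p ^ j % p) (m / p ^ j % p) = 1 := by
    intro j hj
    have hj' : j < k := Finset.mem_range.mp hj
    have hsplit : p ^ k * c = p ^ j * (p * (p ^ (k - j - 1) * c)) := by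
      have hk : j + 1 + (k - j - 1) = k := by omega
      conv_lhs => rw [← hk]
      rw [pow_add, pow_add, pow_one]; ring
    rw [hsplit, Nat.add_mul_div_left _ _ (pow_pos hp.pos j),
      Nat.add_mul_mod_self_left, Nat.choose_self]
  have key : (Nat.choose (p ^ (k + r) - i) m : ℤ) ≡ 1 [ZMOD p] := by
    have H := Choose.choose_modEq_choose_mul_prod_range_choose
      (p := p) (n := p ^ (k + r) - i) (k := m) k
    refine H.trans ?_
    rw [hn]
    have heq : Nat.choose ((m + p ^ k * c) / p ^ k) (m / p ^ k) *
        ∏ j ∈ Finset.range k,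
          Nat.choose ((m + p ^ k * c) / p ^ j % p) (m / p ^ j % p) = 1 := by
      rw [hhead, Nat.div_eq_of_lt hm, Nat.choose_zero_right, one_mul,
        Finset.prod_eq_one hprod]
    rw [← Nat.cast_mul, heq, Nat.cast_one]
  rw [show (1 : ℕ) = ((1 : ℕ)) from rfl, ← Int.natCast_modEq_iff]
  exact_mod_cast key
end

section
/- Let p be a prime and k ≥ 0, r ≥ 1 natural numbers. Then ∏_{i=0}^{r−1} ((p^{k+i})!)^{p−1} divides (p^{k+r} − p^k)!, and the quotient (p^{k+r} − p^k)! / ∏_{i=0}^{r−1} ((p^{k+i})!)^{p−1} is congruent to (−1)^r modulo p. -/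
open Nat

/-- Lucas corollary: for `a < p^t` and `c < p`, `choose (a + c*p^t) (p^t) ≡ c mod p`. -/
lemma lucas_aux (p : ℕ) (hp : p.Prime) (t a c : ℕ) (ha : a < p ^ t) (hc : c < p) :
    (((a + c * p ^ t).choose (p ^ t) : ℕ) : ZMod p) = (c : ZMod p) := by
  haveI : Fact p.Prime := ⟨hp⟩
  have h := Choose.choose_modEq_choose_mul_prod_range_choose
    (n := a + c * p ^ t) (k := p ^ t) (p := p) t
  have hpt : 0 < p ^ t := pow_pos hp.pos t
  have hn : (a + c * p ^ t) / p ^ t = c := by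
    rw [Nat.add_mul_div_right _ _ hpt, Nat.div_eq_of_lt ha, zero_add]
  have hk : (p ^ t) / p ^ t = 1 := Nat.div_self hpt
  have hprod : ∏ i ∈ Finset.range t, (((a + c * p ^ t) / p ^ i % p).choose
      ((p ^ t) / p ^ i % p)) = 1 := by
    apply Finset.prod_eq_one
    intro i hi
    have hit : i < t := Finset.mem_range.mp hi
    have h3 : (p ^ t) / p ^ i = p ^ (t - i) := Nat.pow_div hit.le hp.pos
    have hdvd : p ∣ p ^ (t - i) := dvd_pow_self p (Nat.sub_ne_zero_of_lt hit)
    have h4 : p ^ (t - i) % p = 0 := Nat.dvd_iff_mod_eq_zero.mp hdvd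
    rw [h3, h4, Nat.choose_zero_right]
  rw [hn, hk, hprod, Nat.choose_one_right] at h
  have h2 := (ZMod.intCast_eq_intCast_iff _ _ _).mpr h
  simpa using h2

/-- Telescoping step: for `a < p^t` and `j < p`, the factorial of `a + j*p^t` factors. -/
lemma block_aux (p : ℕ) (hp : p.Prime) (t a : ℕ) (ha : a < p ^ t) :
    ∀ j, j < p → ∃ C : ℕ, (a + j * p ^ t).factorial =
      a.factorial * ((p ^ t).factorial) ^ j * C ∧ (C : ZMod p) = (j.factorial : ZMod p) := by
  intro j
  induction j with
  | zero => intro _; exact ⟨1, by simp, by simp⟩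
  | succ j ih =>
    intro hj
    obtain ⟨C, hC, hCz⟩ := ih (lt_of_le_of_lt (Nat.le_succ j) hj)
    refine ⟨C * (a + (j + 1) * p ^ t).choose (p ^ t), ?_, ?_⟩
    · have key := Nat.add_choose_mul_factorial_mul_factorial (a + j * p ^ t) (p ^ t)
      have harr : a + (j + 1) * p ^ t = a + j * p ^ t + p ^ t := by ring
      calc (a + (j + 1) * p ^ t).factorial
          = (a + j * p ^ t + p ^ t).factorial := by rw [harr]
        _ = (a + j * p ^ t + p ^ t).choose (p ^ t) * (a + j * p ^ t).factorial
              * (p ^ t).factorial := key.symm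
        _ = a.factorial * ((p ^ t).factorial) ^ (j + 1)
              * (C * (a + (j + 1) * p ^ t).choose (p ^ t)) := by
            rw [hC, ← harr]; ring
    · push_cast
      rw [hCz, lucas_aux p hp t a (j + 1) ha hj]
      rw [Nat.factorial_succ]
      push_cast
      ring

/-- Main existence lemma. -/
lemma main_aux (p : ℕ) (hp : p.Prime) (k : ℕ) :
    ∀ r : ℕ, ∃ Q : ℕ, (p ^ (k + r) - p ^ k).factorial =
      (∏ i ∈ Finset.range r, ((p ^ (k + i)).factorial) ^ (p - 1)) * Q ∧
      (Q : ZMod p) = (-1) ^ r := by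
  haveI : Fact p.Prime := ⟨hp⟩
  intro r
  induction r with
  | zero => exact ⟨1, by simp, by simp⟩
  | succ r ih =>
    obtain ⟨Q, hQ, hQz⟩ := ih
    have hpk : p ^ k ≤ p ^ (k + r) := Nat.pow_le_pow_right hp.pos (by omega)
    have ha : p ^ (k + r) - p ^ k < p ^ (k + r) :=
      Nat.sub_lt (pow_pos hp.pos _) (pow_pos hp.pos _)
    obtain ⟨C, hC, hCz⟩ := block_aux p hp (k + r) (p ^ (k + r) - p ^ k) ha (p - 1)
      (Nat.sub_lt hp.pos one_pos)
    have harith : p ^ (k + (r + 1)) - p ^ k =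
        (p ^ (k + r) - p ^ k) + (p - 1) * p ^ (k + r) := by
      have h1 : p ^ (k + (r + 1)) = p * p ^ (k + r) := by
        rw [show k + (r + 1) = (k + r) + 1 from rfl, pow_succ, mul_comm]
      have hp1 : 1 ≤ p := hp.pos
      rw [h1, Nat.sub_mul, one_mul]
      have : p ^ (k + r) ≤ p * p ^ (k + r) := Nat.le_mul_of_pos_left _ hp.pos
      omega
    refine ⟨Q * C, ?_, ?_⟩
    · rw [harith, hC, hQ, Finset.prod_range_succ]
      ring
    · push_cast
      rw [hQz, hCz, ZMod.wilsons_lemma]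
      ring

/-- For `p` prime, `k ≥ 0`, `r ≥ 1`, the product `∏_{i=0}^{r−1} ((p^{k+i})!)^{p−1}`
divides `(p^{k+r} − p^k)!`, and the quotient is congruent to `(−1)^r` modulo `p`. -/
theorem stmt12 (p : ℕ) (hp : p.Prime) (k r : ℕ) (hr : 1 ≤ r) :
    (∏ i ∈ Finset.range r, ((p ^ (k + i)).factorial) ^ (p - 1)) ∣ (p ^ (k + r) - p ^ k).factorial ∧
    (((p ^ (k + r) - p ^ k).factorial /
        (∏ i ∈ Finset.range r, ((p ^ (k + i)).factorial) ^ (p - 1)) : ℕ) : ℤ) ≡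
      (-1) ^ r [ZMOD (p : ℤ)] := by
  haveI : Fact p.Prime := ⟨hp⟩
  obtain ⟨Q, hQ, hQz⟩ := main_aux p hp k r
  have hPpos : 0 < ∏ i ∈ Finset.range r, ((p ^ (k + i)).factorial) ^ (p - 1) :=
    Finset.prod_pos fun i _ => pow_pos (Nat.factorial_pos _) _
  have hdiv : (p ^ (k + r) - p ^ k).factorial /
      (∏ i ∈ Finset.range r, ((p ^ (k + i)).factorial) ^ (p - 1)) = Q := by
    rw [hQ, Nat.mul_div_cancel_left _ hPpos]
  refine ⟨⟨Q, hQ⟩, ?_⟩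
  rw [← ZMod.intCast_eq_intCast_iff]
  rw [hdiv]
  push_cast
  rw [hQz]
end

section
/- Let p be a prime, m a natural number, and n, q, i natural numbers with i < p^m. Then binom(n, p^m·q + i) ≡ binom(n, p^m·q) · binom(n, i) (mod p). -/
open Finset

lemma aux_div (p m q i : ℕ) (hp : 0 < p) (hi : i < p ^ m) :
    (p ^ m * q + i) / p ^ m = q := by
  rw [Nat.mul_add_div (pow_pos hp m), Nat.div_eq_of_lt hi, add_zero]

lemma aux_mod (p : ℕ) (hp : 0 < p) (m q i j : ℕ) (hj : j < m) :
    (p ^ m * q + i) / p ^ j % p = i / p ^ j % p := by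
  have hm : m = j + 1 + (m - j - 1) := by omega
  have h : p ^ m * q = p ^ j * (p * (p ^ (m - j - 1) * q)) := by
    conv_lhs => rw [hm]
    rw [pow_add, pow_add]; ring
  rw [h, Nat.mul_add_div (pow_pos hp j), Nat.mul_add_mod]

/-- For `p` prime, `m, n, q, i : ℕ` with `i < p^m`,
`binom(n, p^m·q + i) ≡ binom(n, p^m·q) · binom(n, i) (mod p)`. -/
theorem stmt13 (p : ℕ) (hp : p.Prime) (m n q i : ℕ) (hi : i < p ^ m) :
    Nat.choose n (p ^ m * q + i) ≡ Nat.choose n (p ^ m * q) * Nat.choose n i [MOD p] := by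
  haveI : Fact p.Prime := ⟨hp⟩
  rw [← Int.natCast_modEq_iff]
  push_cast
  have h1 := Choose.choose_modEq_choose_mul_prod_range_choose (n := n) (k := p ^ m * q + i) (p := p) m
  have h2 := Choose.choose_modEq_choose_mul_prod_range_choose (n := n) (k := p ^ m * q) (p := p) m
  have h3 := Choose.choose_modEq_choose_mul_prod_range_choose (n := n) (k := i) (p := p) m
  have e1 : (p ^ m * q + i) / p ^ m = q := aux_div p m q i hp.pos hi
  have e2 : (p ^ m * q) / p ^ m = q := by
    simpa using aux_div p m q 0 hp.pos (pow_pos hp.pos m)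
  have e3 : i / p ^ m = 0 := Nat.div_eq_of_lt hi
  rw [e1] at h1
  rw [e2] at h2
  rw [e3] at h3
  have hprod1 : ∀ j ∈ range m, Nat.choose (n / p ^ j % p) ((p ^ m * q + i) / p ^ j % p)
      = Nat.choose (n / p ^ j % p) (i / p ^ j % p) := by
    intro j hj
    rw [aux_mod p hp.pos m q i j (mem_range.mp hj)]
  have hprod2 : ∀ j ∈ range m, Nat.choose (n / p ^ j % p) ((p ^ m * q) / p ^ j % p)
      = Nat.choose (n / p ^ j % p) 0 := by
    intro j hj
    have := aux_mod p hp.pos m q 0 j (mem_range.mp hj)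
    simp only [add_zero] at this
    rw [this]
    simp
  rw [prod_congr rfl hprod1] at h1
  rw [prod_congr rfl hprod2] at h2
  simp only [Nat.choose_zero_right, prod_const_one, mul_one] at h2
  refine h1.trans ?_
  have := (h2.mul h3).symm
  simpa [mul_assoc, mul_comm, mul_left_comm] using this
end

section
/- Let p be a prime, m a natural number, and n, q natural numbers with q ≤ p − 1. Then binom(n, p^m·q) ≡ binom(binom(n, p^m), q) (mod p). -/
open Nat

private lemma auxA {p : ℕ} [Fact p.Prime] {a q : ℕ} (hq : q < p) :
    Nat.choose a q ≡ Nat.choose (a % p) q [MOD p] := by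
  have := Choose.choose_modEq_choose_mod_mul_choose_div_nat (n := a) (k := q) (p := p)
  simpa [Nat.mod_eq_of_lt hq, Nat.div_eq_of_lt hq] using this

private lemma auxB {p : ℕ} [Fact p.Prime] {q : ℕ} (hq : q < p) :
    ∀ (m n : ℕ), Nat.choose n (p ^ m * q) ≡ Nat.choose (n / p ^ m % p) q [MOD p] := by
  intro m
  induction m with
  | zero => intro n; simpa using auxA hq
  | succ m ih =>
    intro n
    have hp : 0 < p := (Fact.out : p.Prime).pos
    have h1 := Choose.choose_modEq_choose_mod_mul_choose_div_nat
      (n := n) (k := p ^ (m + 1) * q) (p := p)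
    have hmod : (p ^ (m + 1) * q) % p = 0 := by
      rw [_root_.pow_succ', mul_assoc]
      exact Nat.mul_mod_right p _
    have hdiv : (p ^ (m + 1) * q) / p = p ^ m * q := by
      rw [pow_succ, mul_comm (p ^ m) p, mul_assoc, Nat.mul_div_cancel_left _ hp]
    rw [hmod, hdiv] at h1
    simp only [Nat.choose_zero_right, one_mul] at h1
    calc Nat.choose n (p ^ (m + 1) * q) ≡ Nat.choose (n / p) (p ^ m * q) [MOD p] := h1
      _ ≡ Nat.choose (n / p / p ^ m % p) q [MOD p] := ih (n / p)
      _ = Nat.choose (n / p ^ (m + 1) % p) q := by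
          rw [Nat.div_div_eq_div_mul, ← _root_.pow_succ']

/-- For `p` prime, `m, n, q : ℕ` with `q ≤ p − 1`,
`binom(n, p^m·q) ≡ binom(binom(n, p^m), q) (mod p)`. -/
theorem stmt14 (p : ℕ) (hp : p.Prime) (m n q : ℕ) (hq : q ≤ p - 1) :
    Nat.choose n (p ^ m * q) ≡ Nat.choose (Nat.choose n (p ^ m)) q [MOD p] := by
  haveI : Fact p.Prime := ⟨hp⟩
  have hq' : q < p := lt_of_le_of_lt hq (Nat.sub_lt hp.pos one_pos)
  have h1 : Nat.choose n (p ^ m) ≡ n / p ^ m % p [MOD p] := by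
    have := auxB (Nat.lt_of_lt_of_le one_lt_two hp.two_le) m n
    simpa using this
  calc Nat.choose n (p ^ m * q) ≡ Nat.choose (n / p ^ m % p) q [MOD p] := auxB hq' m n
    _ = Nat.choose (n / p ^ m % p % p) q := by rw [Nat.mod_mod_of_dvd _ dvd_rfl]
    _ = Nat.choose (Nat.choose n (p ^ m) % p) q := by rw [h1.symm]
    _ ≡ Nat.choose (Nat.choose n (p ^ m)) q [MOD p] := (auxA hq').symm
end

section
/- Let p be a prime and let A be an associative unital algebra over 𝔽_p = ZMod p. Suppose y ∈ A satisfies y^p = y. Then the element b = ((p−1)!)^{−1} · ∏_{m=0}^{p−2} (y − m·1) is idempotent: b² = b. -/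
open Polynomial in
private lemma poly_key (p : ℕ) (hp : p.Prime) :
    (((List.range p).map (fun m : ℕ => (X : (ZMod p)[X]) - C (m : ZMod p))).prod)
      = X ^ p - X := by
  haveI : Fact p.Prime := ⟨hp⟩
  have hcard : Fintype.card (ZMod p) = p := ZMod.card p
  have h1 : (X : (ZMod p)[X]).degree < (X ^ p : (ZMod p)[X]).degree := by
    rw [degree_X_pow, degree_X]
    exact_mod_cast hp.one_lt
  have hmonic : (X ^ p - X : (ZMod p)[X]).Monic := (monic_X_pow p).sub_of_left h1
  have hroots : ((X ^ p - X : (ZMod p)[X]).roots) = Finset.univ.val := by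
    have := FiniteField.roots_X_pow_card_sub_X (ZMod p)
    rwa [hcard] at this
  have hdeg : (X ^ p - X : (ZMod p)[X]).natDegree = p :=
    FiniteField.X_pow_card_sub_X_natDegree_eq _ hp.one_lt
  have key := prod_multiset_X_sub_C_of_monic_of_roots_card_eq hmonic
    (by rw [hroots, hdeg]; simpa using hcard)
  rw [hroots] at key
  rw [← key]
  -- now: list prod over range p = multiset prod over univ.val
  have : ((Finset.univ.val : Multiset (ZMod p)).map (fun a => X - C a)).prod
      = ∏ a : ZMod p, (X - C a) := rfl
  rw [this]
  have h2 : ∏ a : ZMod p, ((X : (ZMod p)[X]) - C a)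
      = ∏ m ∈ Finset.range p, ((X : (ZMod p)[X]) - C (m : ZMod p)) := by
    refine Finset.prod_nbij' (fun a => a.val) (fun m => (m : ZMod p))
      (fun a _ => Finset.mem_range.mpr (ZMod.val_lt a))
      (fun m _ => Finset.mem_univ _)
      (fun a _ => ZMod.natCast_rightInverse a)
      (fun m hm => ZMod.val_cast_of_lt (Finset.mem_range.mp hm))
      (fun a _ => by rw [ZMod.natCast_rightInverse a])
  rw [h2, Finset.prod_eq_multiset_prod, Finset.range_val]
  rfl


/-- For `p` prime and an `𝔽_p`-algebra `A`, if `y ∈ A` satisfies `y^p = y`, then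
`b = ((p−1)!)⁻¹ • ∏_{m=0}^{p−2} (y − m·1)` is idempotent. -/
theorem stmt15 (p : ℕ) (hp : p.Prime)
    (A : Type*) [Ring A] [Algebra (ZMod p) A]
    (y : A) (hy : y ^ p = y)
    (b : A)
    (hb : b = (((p - 1).factorial : ZMod p))⁻¹ •
      (((List.range (p - 1)).map (fun m : ℕ => y - (m : A))).prod)) :
    b ^ 2 = b := by
  haveI : Fact p.Prime := ⟨hp⟩
  set P := ((List.range (p - 1)).map (fun m : ℕ => y - (m : A))).prod with hP
  have poly_key := poly_key p hp
  have hfull : ((List.range p).map (fun m : ℕ => y - (m : A))).prod = 0 := by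
    have h := congrArg (Polynomial.aeval y) poly_key
    rw [map_list_prod, map_sub, map_pow, Polynomial.aeval_X, List.map_map] at h
    simp only [Function.comp_def, map_sub, Polynomial.aeval_X, map_natCast] at h
    rw [h, hy, sub_self]
  have hsplit : P * (y - ((p - 1 : ℕ) : A)) = 0 := by
    have hpp : p = (p - 1) + 1 := (Nat.succ_pred_eq_of_pos hp.pos).symm
    rw [hpp, List.range_succ, List.map_append, List.prod_append] at hfull
    simpa using hfull
  have hm1 : ((p - 1 : ℕ) : A) = -1 := by
    have hz : ((p : ℕ) : A) = 0 := by
      rw [← map_natCast (algebraMap (ZMod p) A) p, ZMod.natCast_self, map_zero]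
    rw [Nat.cast_sub hp.one_le, hz, Nat.cast_one, zero_sub]
  have hPy : P * y = -P := by
    rw [hm1, sub_neg_eq_add, mul_add, mul_one, add_eq_zero_iff_eq_neg] at hsplit
    exact hsplit
  have hcomm : ∀ k : ℕ, Commute y (((List.range k).map (fun m : ℕ => y - (m : A))).prod) := by
    intro k
    apply Commute.list_prod_right
    intro x hx
    simp only [List.mem_map] at hx
    obtain ⟨m, _, rfl⟩ := hx
    exact (Commute.refl y).sub_right ((Nat.cast_commute m y).symm)
  have hyP : y * P = -P := by rw [(hcomm (p - 1)).eq, hPy]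
  have hstep : ∀ k : ℕ, (((List.range k).map (fun m : ℕ => y - (m : A))).prod) * P
      = (((-1 : ZMod p)) ^ k * (k.factorial : ZMod p)) • P := by
    intro k
    induction k with
    | zero => simp
    | succ k ih =>
      rw [List.range_succ, List.map_append, List.prod_append, List.map_singleton,
        List.prod_singleton, mul_assoc]
      have hfac : (y - (k : A)) * P = ((-(1 + (k : ℕ)) : ZMod p)) • P := by
        have hk : (k : A) * P = ((k : ℕ) : ZMod p) • P := by
          rw [Algebra.smul_def, map_natCast]
        rw [sub_mul, hyP, hk, neg_smul, add_smul, one_smul, neg_add, sub_eq_add_neg]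
      rw [hfac, mul_smul_comm, ih, smul_smul]
      congr 1
      push_cast [Nat.factorial_succ]
      ring
  have hPP : P * P = ((-1 : ZMod p)) • P := by
    have h := hstep (p - 1)
    rw [← hP] at h
    have hsc : ((-1 : ZMod p)) ^ (p - 1) * ((p - 1).factorial : ZMod p) = -1 := by
      rw [ZMod.wilsons_lemma]
      rcases hp.eq_two_or_odd' with h2 | hodd
      · subst h2; rfl
      · have he : Even (p - 1) := Nat.Odd.sub_odd hodd odd_one
        rw [he.neg_one_pow]; ring
    rw [h, hsc]
  have hb' : b = (-1 : ZMod p) • P := by rw [hb, ZMod.wilsons_lemma, inv_neg_one]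
  calc b ^ 2 = ((-1 : ZMod p) • P) * ((-1 : ZMod p) • P) := by rw [sq, hb']
    _ = ((-1) * (-1) : ZMod p) • (P * P) := by
        rw [smul_mul_smul_comm]
    _ = P * P := by rw [neg_mul_neg, one_mul, one_smul]
    _ = (-1 : ZMod p) • P := hPP
    _ = b := hb'.symm
end

section
/- Let p be a prime and k ≥ 1 a natural number. For all natural numbers i, j with 1 ≤ i ≤ p^k − 1 and 1 ≤ j ≤ p^k − i, the prime p divides the binomial coefficient binom(2·p^k − i − j, p^k − i). -/
/-- For `p` prime, `k ≥ 1`, and naturals `i, j` with `1 ≤ i ≤ p^k − 1` and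
`1 ≤ j ≤ p^k − i`, `p` divides `binom(2p^k − i − j, p^k − i)`. -/
theorem stmt16 (p : ℕ) (hp : p.Prime) (k : ℕ) (hk : 1 ≤ k) (i j : ℕ)
    (hi1 : 1 ≤ i) (hi2 : i ≤ p ^ k - 1) (hj1 : 1 ≤ j) (hj2 : j ≤ p ^ k - i) :
    p ∣ Nat.choose (2 * p ^ k - i - j) (p ^ k - i) := by
  have hp2 : 2 ≤ p := hp.two_le
  have hN2 : 2 ≤ p ^ k := by
    calc 2 ≤ p := hp2
    _ = p ^ 1 := (pow_one p).symm
    _ ≤ p ^ k := Nat.pow_le_pow_right (by omega) hk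
  set n := 2 * p ^ k - i - j with hn
  set a := p ^ k - i with ha
  have han : a ≤ n := by omega
  have hnlt : n < p ^ (k + 1) := by
    have : 2 * p ^ k ≤ p ^ (k + 1) := by
      have := Nat.mul_le_mul_right (p ^ k) hp2
      rw [pow_succ']; exact this
    omega
  have hlog : Nat.log p n < k + 1 := Nat.log_lt_of_lt_pow (by omega) hnlt
  have hmul := Nat.Prime.emultiplicity_choose hp han hlog
  have hmem : k ∈ Finset.filter (fun t => p ^ t ≤ a % p ^ t + (n - a) % p ^ t)
      (Finset.Ico 1 (k + 1)) := by
    refine Finset.mem_filter.2 ⟨Finset.mem_Ico.2 ⟨hk, by omega⟩, ?_⟩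
    have h1 : a % p ^ k = a := Nat.mod_eq_of_lt (by omega)
    have h2 : (n - a) % p ^ k = n - a := Nat.mod_eq_of_lt (by omega)
    omega
  have hcard : 1 ≤ (Finset.filter (fun t => p ^ t ≤ a % p ^ t + (n - a) % p ^ t)
      (Finset.Ico 1 (k + 1))).card := Finset.card_pos.2 ⟨k, hmem⟩
  have : (1 : ℕ∞) ≤ emultiplicity p (n.choose a) := by
    rw [hmul]
    exact_mod_cast hcard
  simpa using pow_dvd_of_le_emultiplicity this
end

section
/- Let p be a prime, k a natural number, n an integer, and i a natural number with 0 ≤ i ≤ p^k − 1. Then the generalized binomial coefficients satisfy binom(n + p^k, i) ≡ binom(n, i) (mod p). -/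
/-- For `p` prime, `k : ℕ`, an integer `n`, and a natural `i ≤ p^k − 1`, the
generalized binomial coefficients satisfy `binom(n + p^k, i) ≡ binom(n, i) (mod p)`. -/
theorem stmt17 (p : ℕ) (hp : p.Prime) (k : ℕ) (n : ℤ) (i : ℕ) (hi : i ≤ p ^ k - 1) :
    Ring.choose (n + (p : ℤ) ^ k) i ≡ Ring.choose n i [ZMOD (p : ℤ)] := by
  have hlt : i < p ^ k := lt_of_le_of_lt hi (Nat.sub_lt (pow_pos hp.pos k) one_pos)
  rw [Int.ModEq] at *
  rw [← ZMod.intCast_eq_intCast_iff', Ring.add_choose_eq i (Commute.all _ _)]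
  push_cast
  rw [Finset.sum_eq_single ((i, 0) : ℕ × ℕ)]
  · simp
  · intro b hb hne
    have hmem := Finset.HasAntidiagonal.mem_antidiagonal.mp hb
    have hb2 : b.2 ≠ 0 := by
      intro h
      apply hne
      have : b.1 = i := by omega
      exact Prod.ext this h
    have hdvd : (p : ℤ) ∣ Ring.choose ((p : ℤ) ^ k) b.2 := by
      rw [← Nat.cast_pow, Ring.choose_natCast]
      exact_mod_cast hp.dvd_choose_pow hb2 (by omega)
    have : ((Ring.choose ((p : ℤ) ^ k) b.2 : ℤ) : ZMod p) = 0 := by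
      rcases hdvd with ⟨c, hc⟩
      simp [hc]
    push_cast [this]
    ring
  · intro h
    exact absurd (Finset.HasAntidiagonal.mem_antidiagonal.mpr (by omega)) h
end
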